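/- arXiv:1110.0088 — 6 statements merged into one kernel-verified Lean document; each statement's English description precedes it below -/
import Mathlib

section
/- Let N ≥ 2, let A be a real N×N matrix and b ∈ ℝ^N be such that rank[b, Ab, …, A^{N−1}b] = N. Let K denote the N×N matrix whose columns are b, Ab, …, A^{N−1}b and set 𝓛 = min_{‖ζ‖=1} ‖Kζ‖; then 𝓛 > 0 and for every ζ ∈ ℝ^N with ‖ζ‖ = 1, the function g(s) = ⟨e^{As} b, ζ⟩ defined on [0,∞) satisfies Σ_{i=0}^{N−1} |g^{(i)}(s)| ≥ 𝓛 e^{−‖A‖ s} for all s ∈ [0,∞), where g^{(i)}(s) = ⟨e^{As} A^i b, ζ⟩ denotes the i-th derivative of g and ‖A‖ is the operator norm of A. -/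
noncomputable section

/-- Euclidean norm on `ℝ^N`. -/
def euNorm {N : ℕ} (x : Fin N → ℝ) : ℝ := Real.sqrt (∑ i, x i ^ 2)

/-- Euclidean inner product on `ℝ^N`. -/
def euDot {N : ℕ} (x y : Fin N → ℝ) : ℝ := ∑ i, x i * y i

/-- Operator norm (w.r.t. the Euclidean norm) of an `N × N` real matrix. -/
def opNorm {N : ℕ} (A : Matrix (Fin N) (Fin N) ℝ) : ℝ :=
  sSup ((fun x => euNorm (A.mulVec x)) '' {x | euNorm x ≤ 1})

/-- The Kalman matrix, whose columns are `b, Ab, …, A^{N-1}b`. -/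
def kalman {N : ℕ} (A : Matrix (Fin N) (Fin N) ℝ) (b : Fin N → ℝ) :
    Matrix (Fin N) (Fin N) ℝ :=
  Matrix.of fun i j => ((A ^ (j : ℕ)).mulVec b) i

/-! Write `K` for the Kalman matrix and `η = (e^{sA})ᵀ ζ`. The derivatives
`g⁽ⁱ⁾(s) = ⟨A^i b, η⟩` are the coordinates of `Kᵀ η`, so their absolute values sum to the
`ℓ¹`-norm of `Kᵀ η`, which dominates its Euclidean norm. By duality (`‖Kw‖² = ⟨KᵀKw, w⟩`) and
surjectivity of `K`, `‖Kᵀ x‖ ≥ 𝓛 ‖x‖`; and `‖η‖ ≥ e^{-‖A‖ s}` because `ζ = e^{-sAᵀ} η` with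
`‖e^{-sAᵀ}‖ ≤ e^{s‖A‖}`. Finally `𝓛 ≥ ‖K⁻¹‖⁻¹ > 0`. -/

open Matrix NormedSpace

theorem NormedSpace.norm_exp_le_exp_norm {𝔸 : Type*} [NormedRing 𝔸] [NormedAlgebra ℝ 𝔸]
    [NormOneClass 𝔸] [CompleteSpace 𝔸] (x : 𝔸) : ‖exp x‖ ≤ Real.exp ‖x‖ := by
  have hsum : Summable fun n : ℕ => (n.factorial : ℝ)⁻¹ * ‖x‖ ^ n := by
    simpa only [smul_eq_mul] using expSeries_summable' (𝕂 := ℝ) ‖x‖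
  rw [exp_eq_tsum ℝ, Real.exp_eq_exp_ℝ, exp_eq_tsum ℝ]
  refine (norm_tsum_le_tsum_norm (norm_expSeries_summable' x)).trans
    (Summable.tsum_le_tsum (fun n => ?_) (norm_expSeries_summable' x) hsum)
  rw [norm_smul, Real.norm_of_nonneg (by positivity), smul_eq_mul]
  exact mul_le_mul_of_nonneg_left (norm_pow_le x n) (by positivity)

theorem Matrix.mulVec_surjective_of_rank_eq_card {n 𝕂 : Type*} [Fintype n] [Field 𝕂]
    {K : Matrix n n 𝕂} (h : K.rank = Fintype.card n) : Function.Surjective K.mulVec := by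
  refine LinearMap.range_eq_top.mp
    (Submodule.eq_top_of_finrank_eq (S := LinearMap.range K.mulVecLin) ?_)
  rw [← Matrix.rank, h, Module.finrank_fintype_fun_eq_card]

section Euclidean

variable {N : ℕ}

theorem euNorm_eq_norm (x : Fin N → ℝ) : euNorm x = ‖WithLp.toLp 2 x‖ := by
  simp [EuclideanSpace.norm_eq, euNorm]

theorem euNorm_nonneg (x : Fin N → ℝ) : 0 ≤ euNorm x := Real.sqrt_nonneg _

theorem euNorm_pos {x : Fin N → ℝ} (hx : x ≠ 0) : 0 < euNorm x := by
  simpa [euNorm_eq_norm] using hx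

theorem euNorm_smul (c : ℝ) (x : Fin N → ℝ) : euNorm (c • x) = |c| * euNorm x := by
  simp only [euNorm_eq_norm, WithLp.toLp_smul, norm_smul, Real.norm_eq_abs]

theorem euNorm_single (i : Fin N) : euNorm (Pi.single i 1) = 1 := by
  simp [euNorm_eq_norm]

theorem euDot_self (x : Fin N → ℝ) : euDot x x = euNorm x ^ 2 := by
  rw [euNorm, Real.sq_sqrt (by positivity)]
  simp only [euDot, sq]

theorem euDot_le_euNorm_mul_euNorm (x y : Fin N → ℝ) : euDot x y ≤ euNorm x * euNorm y :=
  Real.sum_mul_le_sqrt_mul_sqrt Finset.univ x y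

theorem euDot_mulVec (E : Matrix (Fin N) (Fin N) ℝ) (x y : Fin N → ℝ) :
    euDot (E *ᵥ x) y = euDot x (Eᵀ *ᵥ y) := by
  change (E *ᵥ x) ⬝ᵥ y = x ⬝ᵥ (Eᵀ *ᵥ y)
  rw [mulVec_transpose, dotProduct_comm, dotProduct_mulVec]
  exact dotProduct_comm _ _

theorem euNorm_le_sum_abs (x : Fin N → ℝ) : euNorm x ≤ ∑ i, |x i| := by
  refine Real.sqrt_le_iff.mpr ⟨by positivity, ?_⟩
  simp_rw [← sq_abs (x _)]
  exact Finset.sum_sq_le_sq_sum_of_nonneg fun i _ => abs_nonneg _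

end Euclidean

section OperatorNorm

open scoped Matrix.Norms.L2Operator

variable {N : ℕ}

theorem opNorm_eq_norm (A : Matrix (Fin N) (Fin N) ℝ) : opNorm A = ‖A‖ := by
  rw [opNorm, l2_opNorm_def, ← ContinuousLinearMap.sSup_unitClosedBall_eq_norm]
  congr 1
  ext r
  simp only [Set.mem_image, Set.mem_ofPred_eq, Metric.mem_closedBall, dist_zero_right,
    euNorm_eq_norm]
  exact ⟨fun ⟨x, hx, h⟩ => ⟨WithLp.toLp 2 x, hx, h⟩, fun ⟨y, hy, h⟩ => ⟨y.ofLp, hy, h⟩⟩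

theorem euNorm_mulVec_le (A : Matrix (Fin N) (Fin N) ℝ) (x : Fin N → ℝ) :
    euNorm (A *ᵥ x) ≤ opNorm A * euNorm x := by
  rw [euNorm_eq_norm, euNorm_eq_norm, opNorm_eq_norm]
  exact l2_opNorm_mulVec A _

theorem opNorm_transpose (A : Matrix (Fin N) (Fin N) ℝ) : opNorm Aᵀ = opNorm A := by
  rw [opNorm_eq_norm, opNorm_eq_norm, ← conjTranspose_eq_transpose_of_trivial,
    l2_opNorm_conjTranspose]

theorem opNorm_smul (c : ℝ) (A : Matrix (Fin N) (Fin N) ℝ) :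
    opNorm (c • A) = |c| * opNorm A := by
  rw [opNorm_eq_norm, opNorm_eq_norm, norm_smul, Real.norm_eq_abs]

theorem opNorm_inv_pos [NeZero N] {K : Matrix (Fin N) (Fin N) ℝ} (hK : IsUnit K) :
    0 < opNorm K⁻¹ := by
  rw [opNorm_eq_norm]
  exact norm_pos_iff.mpr ((isUnit_nonsing_inv_iff.mpr hK).ne_zero)

theorem opNorm_exp_le [NeZero N] (A : Matrix (Fin N) (Fin N) ℝ) :
    opNorm (exp A) ≤ Real.exp (opNorm A) := by
  rw [opNorm_eq_norm, opNorm_eq_norm]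
  exact norm_exp_le_exp_norm A

end OperatorNorm

section LowerBounds

variable {N : ℕ}

theorem exp_neg_mul_euNorm_le_euNorm_exp_transpose_mulVec [NeZero N]
    (A : Matrix (Fin N) (Fin N) ℝ) (s : ℝ) (ζ : Fin N → ℝ) :
    Real.exp (-(opNorm A * |s|)) * euNorm ζ ≤ euNorm ((exp (s • A))ᵀ *ᵥ ζ) := by
  have hζ : exp (-(s • Aᵀ)) *ᵥ ((exp (s • A))ᵀ *ᵥ ζ) = ζ := by
    rw [← exp_transpose, transpose_smul, mulVec_mulVec,
      ← Matrix.exp_add_of_commute _ _ (Commute.refl (s • Aᵀ)).neg_left, neg_add_cancel, exp_zero,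
      one_mulVec]
  set η := (exp (s • A))ᵀ *ᵥ ζ
  have hnorm : opNorm (exp (-(s • Aᵀ))) ≤ Real.exp (opNorm A * |s|) := by
    calc _ ≤ Real.exp (opNorm (-(s • Aᵀ))) := opNorm_exp_le _
      _ = _ := by rw [← neg_smul, opNorm_smul, opNorm_transpose, abs_neg, mul_comm]
  have hbound : euNorm ζ ≤ Real.exp (opNorm A * |s|) * euNorm η :=
    calc euNorm ζ = euNorm (exp (-(s • Aᵀ)) *ᵥ η) := by rw [hζ]
      _ ≤ opNorm (exp (-(s • Aᵀ))) * euNorm η := euNorm_mulVec_le _ _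
      _ ≤ _ := mul_le_mul_of_nonneg_right hnorm (euNorm_nonneg η)
  rwa [Real.exp_neg, inv_mul_le_iff₀ (Real.exp_pos _)]

-- For `N = 0` the unit sphere is empty and this is the junk value `sInf ∅ = 0`.
def minSingularValue (K : Matrix (Fin N) (Fin N) ℝ) : ℝ :=
  sInf ((fun ζ => euNorm (K *ᵥ ζ)) '' {ζ | euNorm ζ = 1})

theorem minSingularValue_le {K : Matrix (Fin N) (Fin N) ℝ} {ζ : Fin N → ℝ} (hζ : euNorm ζ = 1) :
    minSingularValue K ≤ euNorm (K *ᵥ ζ) :=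
  csInf_le ⟨0, by rintro _ ⟨_, _, rfl⟩; exact euNorm_nonneg _⟩ ⟨ζ, hζ, rfl⟩

theorem minSingularValue_mul_euNorm_le (K : Matrix (Fin N) (Fin N) ℝ) (v : Fin N → ℝ) :
    minSingularValue K * euNorm v ≤ euNorm (K *ᵥ v) := by
  rcases eq_or_ne v 0 with rfl | hv
  · simp [euNorm]
  have hpos := euNorm_pos hv
  have hunit : euNorm ((euNorm v)⁻¹ • v) = 1 := by
    rw [euNorm_smul, abs_inv, abs_of_pos hpos, inv_mul_cancel₀ hpos.ne']
  have h := minSingularValue_le (K := K) hunit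
  rwa [mulVec_smul, euNorm_smul, abs_inv, abs_of_pos hpos, ← div_eq_inv_mul,
    le_div_iff₀ hpos] at h

theorem minSingularValue_pos [NeZero N] {K : Matrix (Fin N) (Fin N) ℝ} (hK : IsUnit K) :
    0 < minSingularValue K := by
  have hinv := opNorm_inv_pos hK
  refine (inv_pos.mpr hinv).trans_le
    (le_csInf ⟨_, Pi.single 0 1, euNorm_single 0, rfl⟩ ?_)
  rintro _ ⟨ζ, hζ, rfl⟩
  have h := euNorm_mulVec_le K⁻¹ (K *ᵥ ζ)
  rw [mulVec_mulVec, nonsing_inv_mul K ((isUnit_iff_isUnit_det K).mp hK), one_mulVec, hζ] at h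
  rwa [inv_le_iff_one_le_mul₀' hinv]

theorem mul_euNorm_le_euNorm_transpose_mulVec {K : Matrix (Fin N) (Fin N) ℝ} {c : ℝ}
    (hc : ∀ v, c * euNorm v ≤ euNorm (K *ᵥ v)) (hK : Function.Surjective K.mulVec)
    (x : Fin N → ℝ) : c * euNorm x ≤ euNorm (Kᵀ *ᵥ x) := by
  obtain ⟨w, rfl⟩ := hK x
  have hdual : euNorm (K *ᵥ w) ^ 2 ≤ euNorm w * euNorm (Kᵀ *ᵥ (K *ᵥ w)) := by
    rw [← euDot_self, euDot_mulVec]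
    exact euDot_le_euNorm_mul_euNorm _ _
  rcases (euNorm_nonneg w).eq_or_lt with hw | hw
  · have hKw : euNorm (K *ᵥ w) = 0 := by
      rw [← hw, zero_mul] at hdual
      exact pow_eq_zero_iff (n := 2) two_ne_zero |>.mp (le_antisymm hdual (sq_nonneg _))
    rw [hKw, mul_zero]
    exact euNorm_nonneg _
  · refine le_of_mul_le_mul_left ?_ hw
    nlinarith [hc w, euNorm_nonneg (K *ᵥ w)]

theorem sum_range_abs_euDot_eq_sum_abs_kalman_transpose_mulVec
    (A E : Matrix (Fin N) (Fin N) ℝ) (b ζ : Fin N → ℝ) :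
    ∑ i ∈ Finset.range N, |euDot (E *ᵥ ((A ^ i) *ᵥ b)) ζ|
      = ∑ j, |((kalman A b)ᵀ *ᵥ (Eᵀ *ᵥ ζ)) j| := by
  rw [← Fin.sum_univ_eq_sum_range (fun i => |euDot (E *ᵥ ((A ^ i) *ᵥ b)) ζ|)]
  refine Finset.sum_congr rfl fun j _ => ?_
  rw [euDot_mulVec]
  rfl

end LowerBounds

/-- if `rank [b, Ab, …, A^{N-1}b] = N` then
`𝓛 = min_{‖ζ‖=1} ‖Kζ‖ > 0` and for every unit vector `ζ` the switching
function `g(s) = ⟨e^{As} b, ζ⟩` satisfies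
`∑_{i=0}^{N-1} |g^{(i)}(s)| ≥ 𝓛 e^{-‖A‖s}` for all `s ≥ 0`,
where `g^{(i)}(s) = ⟨e^{As} A^i b, ζ⟩`. -/
theorem switching_function_lower_bound
    (N : ℕ) (hN : 2 ≤ N) (A : Matrix (Fin N) (Fin N) ℝ) (b : Fin N → ℝ)
    (hrank : (kalman A b).rank = N)
    (L : ℝ)
    (hL : L = sInf ((fun ζ => euNorm ((kalman A b).mulVec ζ)) '' {ζ | euNorm ζ = 1})) :
    0 < L ∧
      ∀ ζ : Fin N → ℝ, euNorm ζ = 1 → ∀ s : ℝ, 0 ≤ s →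
        L * Real.exp (-(opNorm A) * s) ≤
          ∑ i ∈ Finset.range N,
            |euDot ((NormedSpace.exp (s • A)).mulVec ((A ^ i).mulVec b)) ζ| := by
  have : NeZero N := ⟨by omega⟩
  set K := kalman A b
  have hL : L = minSingularValue K := hL
  have hsurj : Function.Surjective K.mulVec :=
    mulVec_surjective_of_rank_eq_card (by rw [hrank, Fintype.card_fin])
  have hK : IsUnit K := mulVec_injective_iff_isUnit.mp
    (K.mulVecLin.injective_iff_surjective.mpr hsurj)
  have hLpos : 0 < L := hL ▸ minSingularValue_pos hK
  refine ⟨hLpos, fun ζ hζ s hs => ?_⟩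
  set η := (exp (s • A))ᵀ *ᵥ ζ
  have hη : Real.exp (-opNorm A * s) ≤ euNorm η := by
    simpa [hζ, abs_of_nonneg hs] using exp_neg_mul_euNorm_le_euNorm_exp_transpose_mulVec A s ζ
  rw [sum_range_abs_euDot_eq_sum_abs_kalman_transpose_mulVec]
  calc L * Real.exp (-opNorm A * s) ≤ L * euNorm η := mul_le_mul_of_nonneg_left hη hLpos.le
    _ ≤ euNorm (Kᵀ *ᵥ η) :=
      mul_euNorm_le_euNorm_transpose_mulVec (hL ▸ minSingularValue_mul_euNorm_le K) hsurj η
    _ ≤ ∑ j, |(Kᵀ *ᵥ η) j| := euNorm_le_sum_abs _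
end
end

section
/- Consider the linear control system ẏ(t) = Ay(t) + Bu(t), y(0) = 0, with N ≥ 2, 1 ≤ M ≤ N, A ∈ ℝ^{N×N}, B ∈ ℝ^{N×M}, and admissible controls u measurable with values in [−1,1]^M. Assume the system is normal, i.e., rank[b_j, Ab_j, …, A^{N−1}b_j] = N for every column b_j of B. Then for every T₀ > 0 there exists a constant γ′ > 0, depending only on N, M, A, B, T₀, such that for every 0 < T ≤ T₀ the closed ball B(0, γ′ T^N) centered at the origin with radius γ′ T^N is contained in the reachable set 𝓡^T. -/
noncomputable section
open MeasureTheory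

/-- An admissible control: measurable with values in the cube `[-1,1]^M`. -/
def IsAdmissible (M : ℕ) (u : ℝ → Fin M → ℝ) : Prop :=
  Measurable u ∧ ∀ t i, u t i ∈ Set.Icc (-1 : ℝ) 1

/-- The reachable set from the origin at time `T` for `ẏ = Ay + Bu`. -/
def linReach (N M : ℕ) (A : Matrix (Fin N) (Fin N) ℝ) (B : Matrix (Fin N) (Fin M) ℝ)
    (T : ℝ) : Set (Fin N → ℝ) :=
  {x | ∃ u : ℝ → Fin M → ℝ, IsAdmissible M u ∧
    x = ∫ s in (0:ℝ)..T, (NormedSpace.exp ((T - s) • A)).mulVec (B.mulVec (u s))}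


/-!
The controls act through a single column `b` of `B`. Write `v t = ∫₀ᵗ exp (σA) b dσ`.
The control equal to `w k` on the last `s k * τ` units of time (with `s k = 1/(k+1)`), summed
over `k`, is admissible as soon as `∑ |w k| ≤ 1`, and it steers `0` to `∑ w k • v (s k * τ)`.

By normality the Kalman matrix `K` is invertible, and the Taylor expansion of the exponential
shows that the `p`-th coordinate of `K⁻¹ v t` is `t^(p+1)/(p+1)! + O(t^(N+1))`. Hence, after
dividing the `p`-th row by `τ^(p+1)`, the matrix with columns `K⁻¹ v (s k * τ)` tends to the
moment matrix `(s k^(p+1)/(p+1)!)`, which is a Vandermonde matrix up to diagonal factors.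
So for small `τ` the matrix with columns `v (s k * τ)` has an inverse of size `O(τ^(-N))`,
and every `x` with `‖x‖ ≤ c τ^N` is reached. For `T` beyond this range of `τ`, one uses the
control of the largest admissible `τ` and pays a factor `(T₁/T₀)^N` in the constant.
-/

open Matrix Filter Topology Asymptotics Finset
open scoped Nat

theorem Asymptotics.IsBigO.intervalIntegral_pow {E : Type*} [NormedAddCommGroup E]
    [NormedSpace ℝ E] {f : ℝ → E} {n : ℕ} (hf : f =O[𝓝 0] fun σ => σ ^ n) :
    (fun t => ∫ σ in (0 : ℝ)..t, f σ) =O[𝓝 0] fun t => t ^ (n + 1) := by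
  obtain ⟨C, hC₀, hC⟩ := hf.exists_pos
  obtain ⟨δ, hδ, hfδ⟩ := Metric.eventually_nhds_iff_ball.1 hC.bound
  refine IsBigO.of_bound C ?_
  filter_upwards [Metric.ball_mem_nhds 0 hδ] with t ht
  have hbound : ∀ σ ∈ Set.uIoc (0 : ℝ) t, ‖f σ‖ ≤ C * |t| ^ n := by
    intro σ hσ
    have hσt : |σ| ≤ |t| := by
      simpa using Set.abs_sub_left_of_mem_uIcc (Set.uIoc_subset_uIcc hσ)
    calc ‖f σ‖ ≤ C * ‖σ ^ n‖ := hfδ σ (by simpa using hσt.trans_lt (by simpa using ht))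
      _ ≤ C * |t| ^ n := by rw [norm_pow, Real.norm_eq_abs]; gcongr
  calc ‖∫ σ in (0 : ℝ)..t, f σ‖ ≤ C * |t| ^ n * |t - 0| :=
        intervalIntegral.norm_integral_le_of_norm_le_const hbound
    _ = C * ‖t ^ (n + 1)‖ := by rw [sub_zero, norm_pow, Real.norm_eq_abs, pow_succ, mul_assoc]

theorem isBigO_exp_smul_sub_sum {𝔸 : Type*} [NormedRing 𝔸] [NormedAlgebra ℝ 𝔸]
    [CompleteSpace 𝔸] (a : 𝔸) (n : ℕ) :
    (fun σ : ℝ => NormedSpace.exp (σ • a) - ∑ p ∈ range n, (σ ^ p / p !) • a ^ p)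
      =O[𝓝 0] fun σ => σ ^ n := by
  have hexp :=
    (NormedSpace.exp_hasFPowerSeriesAt_zero (𝕂 := ℝ) (𝔸 := 𝔸)).isBigO_sub_partialSum_pow n
  have hlim : Tendsto (fun σ : ℝ => σ • a) (𝓝 0) (𝓝 0) := by
    simpa using (continuous_id.smul continuous_const).tendsto (0 : ℝ) (f := fun σ : ℝ => σ • a)
  refine (hexp.comp_tendsto hlim).congr_left (fun σ => ?_) |>.trans ?_
  · simp [FormalMultilinearSeries.partialSum, NormedSpace.expSeries_apply_eq, smul_pow,
      smul_smul, div_eq_inv_mul]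
  · refine IsBigO.of_bound (‖a‖ ^ n) (Eventually.of_forall fun σ => ?_)
    simp [norm_smul, mul_pow, mul_comm]

theorem Filter.Tendsto.eventually_isUnit_and_norm_ringInverse_lt {R α : Type*} [NormedRing R]
    [HasSummableGeomSeries R] {l : Filter α} {f : α → R} {x : R} (hf : Tendsto f l (𝓝 x))
    (hx : IsUnit x) {C : ℝ} (hC : ‖Ring.inverse x‖ < C) :
    ∀ᶠ a in l, IsUnit (f a) ∧ ‖Ring.inverse (f a)‖ < C :=
  (hf.eventually (Units.isOpen.mem_nhds hx)).and <|
    ((NormedRing.inverse_continuousAt hx.unit).tendsto.comp hf).norm.eventually (gt_mem_nhds hC)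

theorem integral_indicator_Ioc_comp_sub {E : Type*} [NormedAddCommGroup E] [NormedSpace ℝ E]
    (f : ℝ → E) {t T : ℝ} (ht : t ∈ Set.Icc 0 T) :
    ∫ s in (0 : ℝ)..T, (Set.Ioc (T - t) T).indicator (fun s => f (T - s)) s =
      ∫ σ in (0 : ℝ)..t, f σ := by
  rw [intervalIntegral.integral_of_le (ht.1.trans ht.2), setIntegral_indicator measurableSet_Ioc,
    Set.inter_eq_self_of_subset_right (Set.Ioc_subset_Ioc_left (by linarith [ht.2])),
    ← intervalIntegral.integral_of_le (by linarith [ht.1]),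
    intervalIntegral.integral_comp_sub_left, sub_self, sub_sub_cancel]

theorem norm_le_euNorm {N : ℕ} (x : Fin N → ℝ) : ‖x‖ ≤ euNorm x := by
  refine (pi_norm_le_iff_of_nonneg (Real.sqrt_nonneg _)).2 fun i => ?_
  rw [Real.norm_eq_abs, ← Real.sqrt_sq_eq_abs]
  exact Real.sqrt_le_sqrt <|
    single_le_sum (f := fun j => x j ^ 2) (fun j _ => sq_nonneg _) (mem_univ i)

theorem Matrix.isUnit_of_rank_eq_card {n K : Type*} [Fintype n] [DecidableEq n] [Field K]
    {A : Matrix n n K} (h : A.rank = Fintype.card n) : IsUnit A := by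
  rw [← mulVec_surjective_iff_isUnit]
  exact LinearMap.range_eq_top.1 <|
    Submodule.eq_top_of_finrank_eq (S := LinearMap.range A.mulVecLin)
      (by rw [← Matrix.rank, h, Module.finrank_fintype_fun_eq_card])

attribute [local instance] Matrix.linftyOpNormedAddCommGroup Matrix.linftyOpNormedSpace
  Matrix.linftyOpNormedRing Matrix.linftyOpNormedAlgebra

def momentMatrix {N : ℕ} (s : Fin N → ℝ) : Matrix (Fin N) (Fin N) ℝ :=
  of fun p k => s k ^ ((p : ℕ) + 1) / ((p : ℕ) + 1)!

theorem isUnit_momentMatrix {N : ℕ} {s : Fin N → ℝ} (hs : Function.Injective s)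
    (hs₀ : ∀ k, s k ≠ 0) : IsUnit (momentMatrix s) := by
  have hfactor : momentMatrix s =
      diagonal (fun p : Fin N => (((p : ℕ) + 1)! : ℝ)⁻¹) * (vandermonde s)ᵀ * diagonal s := by
    ext p k
    simp [momentMatrix, mul_diagonal, diagonal_mul, vandermonde, pow_succ, div_eq_inv_mul]
    ring
  rw [isUnit_iff_isUnit_det, hfactor, det_mul, det_mul, det_transpose, det_diagonal,
    det_diagonal]
  refine ((IsUnit.mul ?_ ?_).mul ?_) <;> rw [isUnit_iff_ne_zero]
  · exact prod_ne_zero_iff.2 fun p _ => by positivity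
  · exact det_vandermonde_ne_zero_iff.2 hs
  · exact prod_ne_zero_iff.2 fun k _ => hs₀ k

def powDiagonal (N : ℕ) (τ : ℝ) : Matrix (Fin N) (Fin N) ℝ :=
  diagonal fun p => τ ^ ((p : ℕ) + 1)

theorem powDiagonal_mul_powDiagonal (N : ℕ) (τ σ : ℝ) :
    powDiagonal N τ * powDiagonal N σ = powDiagonal N (τ * σ) := by
  simp only [powDiagonal, diagonal_mul_diagonal, mul_pow]

theorem powDiagonal_one (N : ℕ) : powDiagonal N 1 = 1 := by
  simp [powDiagonal]

theorem norm_powDiagonal_le {N : ℕ} {σ : ℝ} (hσ : 1 ≤ σ) : ‖powDiagonal N σ‖ ≤ σ ^ N := by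
  rw [powDiagonal, linfty_opNorm_diagonal, pi_norm_le_iff_of_nonneg (by positivity)]
  intro p
  rw [Real.norm_of_nonneg (by positivity)]
  exact pow_le_pow_right₀ hσ p.isLt

theorem kalman_mulVec {N : ℕ} (A : Matrix (Fin N) (Fin N) ℝ) (b c : Fin N → ℝ) :
    kalman A b *ᵥ c = ∑ p, c p • (A ^ (p : ℕ) *ᵥ b) := by
  ext i
  simp [kalman, mulVec, dotProduct, mul_comm]

theorem isBigO_integral_exp_smul_mulVec_sub_kalman {N : ℕ} (A : Matrix (Fin N) (Fin N) ℝ)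
    (b : Fin N → ℝ) :
    (fun t : ℝ => (∫ σ in (0 : ℝ)..t, NormedSpace.exp (σ • A) *ᵥ b) -
        kalman A b *ᵥ fun p => t ^ ((p : ℕ) + 1) / ((p : ℕ) + 1)!)
      =O[𝓝 0] fun t => t ^ (N + 1) := by
  set S : ℝ → Matrix (Fin N) (Fin N) ℝ := fun σ => ∑ p ∈ range N, (σ ^ p / p !) • A ^ p
  have hcont : Continuous fun σ : ℝ => NormedSpace.exp (σ • A) *ᵥ b :=
    (NormedSpace.exp_continuous.comp (continuous_id.smul continuous_const)).matrix_mulVec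
      continuous_const
  have hpoly : ∀ t : ℝ, ∫ σ in (0 : ℝ)..t, S σ *ᵥ b =
      kalman A b *ᵥ fun p => t ^ ((p : ℕ) + 1) / ((p : ℕ) + 1)! := by
    intro t
    simp only [S, sum_mulVec, smul_mulVec, kalman_mulVec]
    rw [intervalIntegral.integral_finsetSum fun p _ =>
        (by fun_prop : Continuous _).intervalIntegrable _ _,
      ← Fin.sum_univ_eq_sum_range (fun p => ∫ σ in (0 : ℝ)..t, (σ ^ p / p !) • (A ^ p *ᵥ b)) N]
    refine Finset.sum_congr rfl fun p _ => ?_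
    rw [intervalIntegral.integral_smul_const, intervalIntegral.integral_div, integral_pow,
      zero_pow (Nat.succ_ne_zero _), sub_zero, Nat.factorial_succ, Nat.cast_mul, div_div]
    push_cast
    rfl
  have hrem : (fun σ : ℝ => (NormedSpace.exp (σ • A) - S σ) *ᵥ b) =O[𝓝 0] fun σ => σ ^ N :=
    (IsBigO.of_bound ‖b‖ (Eventually.of_forall fun σ => by
      rw [mul_comm]; exact linfty_opNorm_mulVec _ _)).trans (isBigO_exp_smul_sub_sum A N)
  refine hrem.intervalIntegral_pow.congr_left fun t => ?_
  rw [← hpoly, ← intervalIntegral.integral_sub (hcont.intervalIntegrable _ _)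
    ((by fun_prop : Continuous _).intervalIntegrable _ _)]
  simp only [sub_mulVec]

def stepResponseMatrix {N : ℕ} (A : Matrix (Fin N) (Fin N) ℝ) (b s : Fin N → ℝ) (τ : ℝ) :
    Matrix (Fin N) (Fin N) ℝ :=
  of fun i k => (∫ σ in (0 : ℝ)..s k * τ, NormedSpace.exp (σ • A) *ᵥ b) i

theorem stepResponseMatrix_mulVec {N : ℕ} (A : Matrix (Fin N) (Fin N) ℝ) (b s : Fin N → ℝ)
    (τ : ℝ) (w : Fin N → ℝ) :
    stepResponseMatrix A b s τ *ᵥ w =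
      ∑ k, w k • ∫ σ in (0 : ℝ)..s k * τ, NormedSpace.exp (σ • A) *ᵥ b := by
  ext i
  simp [stepResponseMatrix, mulVec, dotProduct, mul_comm]

theorem tendsto_powDiagonal_inv_mul_inv_kalman_mul_stepResponseMatrix {N : ℕ}
    {A : Matrix (Fin N) (Fin N) ℝ} {b : Fin N → ℝ} (hK : IsUnit (kalman A b))
    (s : Fin N → ℝ) :
    Tendsto (fun τ => powDiagonal N τ⁻¹ * ((kalman A b)⁻¹ * stepResponseMatrix A b s τ))
      (𝓝[≠] 0) (𝓝 (momentMatrix s)) := by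
  set K := kalman A b
  have hKK : K⁻¹ * K = 1 := nonsing_inv_mul K ((isUnit_iff_isUnit_det K).1 hK)
  have hcoord : (fun t : ℝ => K⁻¹ *ᵥ (∫ σ in (0 : ℝ)..t, NormedSpace.exp (σ • A) *ᵥ b) -
      fun p : Fin N => t ^ ((p : ℕ) + 1) / ((p : ℕ) + 1)!) =O[𝓝 0] fun t => t ^ (N + 1) := by
    refine (IsBigO.of_bound ‖K⁻¹‖ (Eventually.of_forall fun t => ?_)).trans
      (isBigO_integral_exp_smul_mulVec_sub_kalman A b)
    refine (congrArg norm ?_).trans_le (linfty_opNorm_mulVec _ _)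
    rw [mulVec_sub, mulVec_mulVec, hKK, one_mulVec]
  refine tendsto_pi_nhds.2 fun p => tendsto_pi_nhds.2 fun k => ?_
  have hscaled := isBigO_pi.1
    (hcoord.comp_tendsto ((continuous_const_mul (s k)).tendsto' 0 0 (mul_zero _))) p
  -- the error is `O(τ^(N+1)) = o(τ^(p+1))` because `p < N`
  have hsmall : Tendsto (fun τ : ℝ => ((K⁻¹ *ᵥ ∫ σ in (0 : ℝ)..s k * τ,
      NormedSpace.exp (σ • A) *ᵥ b) p - (s k * τ) ^ ((p : ℕ) + 1) / ((p : ℕ) + 1)!) /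
        τ ^ ((p : ℕ) + 1)) (𝓝 0) (𝓝 0) := by
    refine (hscaled.trans ?_ |>.trans_isLittleO
      (isLittleO_pow_pow (m := (p : ℕ) + 1) (n := N + 1) (by omega))).tendsto_div_nhds_zero
    simp_rw [Function.comp_def, mul_pow]
    exact isBigO_const_mul_self _ _ _
  have hlim := hsmall.add_const (s k ^ ((p : ℕ) + 1) / ((p : ℕ) + 1)!)
  rw [zero_add] at hlim
  refine (hlim.mono_left nhdsWithin_le_nhds).congr' ?_
  filter_upwards [self_mem_nhdsWithin] with τ (hτ : τ ≠ 0)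
  simp only [powDiagonal, diagonal_mul]
  simp only [mul_apply, stepResponseMatrix, of_apply, mulVec, dotProduct, mul_pow, inv_pow]
  field_simp
  ring

theorem exists_norm_inv_stepResponseMatrix_le {N : ℕ} {A : Matrix (Fin N) (Fin N) ℝ}
    {b : Fin N → ℝ} (hK : IsUnit (kalman A b)) {s : Fin N → ℝ} (hs : Function.Injective s)
    (hs₀ : ∀ k, s k ≠ 0) :
    ∃ C ≥ 0, ∃ T₁ > 0, ∀ τ ∈ Set.Ioc 0 T₁,
      IsUnit (stepResponseMatrix A b s τ) ∧ ‖(stepResponseMatrix A b s τ)⁻¹‖ ≤ C / τ ^ N := by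
  set K := kalman A b
  set M : ℝ → Matrix (Fin N) (Fin N) ℝ :=
    fun τ => powDiagonal N τ⁻¹ * (K⁻¹ * stepResponseMatrix A b s τ)
  set C₀ := ‖(momentMatrix s)⁻¹‖ + 1
  have hev := (tendsto_powDiagonal_inv_mul_inv_kalman_mul_stepResponseMatrix hK s
    ).eventually_isUnit_and_norm_ringInverse_lt (isUnit_momentMatrix hs hs₀) (C := C₀)
    (by rw [← nonsing_inv_eq_ringInverse]; exact lt_add_one _)
  obtain ⟨δ, hδ, hδM⟩ := Metric.mem_nhdsWithin_iff.1 hev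
  refine ⟨C₀ * ‖K⁻¹‖, by positivity, min 1 (δ / 2), by positivity, fun τ ⟨hτ₀, hτ⟩ => ?_⟩
  obtain ⟨hMunit, hMnorm⟩ : IsUnit (M τ) ∧ ‖(M τ)⁻¹‖ < C₀ := by
    rw [nonsing_inv_eq_ringInverse]
    refine hδM ⟨?_, hτ₀.ne'⟩
    rw [Metric.mem_ball, Real.dist_0_eq_abs, abs_of_pos hτ₀]
    linarith [min_le_right 1 (δ / 2)]
  have hDD : powDiagonal N τ⁻¹ * powDiagonal N τ = 1 := by
    rw [powDiagonal_mul_powDiagonal, inv_mul_cancel₀ hτ₀.ne', powDiagonal_one]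
  have hfactor : stepResponseMatrix A b s τ = K * powDiagonal N τ * M τ := by
    simp only [M, ← Matrix.mul_assoc]
    rw [Matrix.mul_assoc K, powDiagonal_mul_powDiagonal, mul_inv_cancel₀ hτ₀.ne',
      powDiagonal_one, Matrix.mul_one, mul_nonsing_inv _ ((isUnit_iff_isUnit_det K).1 hK),
      Matrix.one_mul]
  have hDunit : IsUnit (powDiagonal N τ) :=
    (isUnit_iff_isUnit_det _).2 (isUnit_det_of_left_inverse hDD)
  refine ⟨hfactor ▸ (hK.mul hDunit).mul hMunit, ?_⟩
  rw [hfactor, Matrix.mul_inv_rev (K * _), Matrix.mul_inv_rev K, inv_eq_left_inv hDD,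
    ← Matrix.mul_assoc]
  calc ‖(M τ)⁻¹ * powDiagonal N τ⁻¹ * K⁻¹‖
      ≤ ‖(M τ)⁻¹‖ * ‖powDiagonal N τ⁻¹‖ * ‖K⁻¹‖ :=
        (norm_mul_le _ _).trans (by gcongr; exact norm_mul_le _ _)
    _ ≤ C₀ * τ⁻¹ ^ N * ‖K⁻¹‖ := by
        gcongr
        exact norm_powDiagonal_le ((one_le_inv₀ hτ₀).2 (hτ.trans (min_le_left _ _)))
    _ = C₀ * ‖K⁻¹‖ / τ ^ N := by rw [inv_pow]; ring

theorem exists_stepResponseMatrix_mulVec_eq_of_norm_le {N : ℕ}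
    {A : Matrix (Fin N) (Fin N) ℝ} {b : Fin N → ℝ} (hK : IsUnit (kalman A b))
    {s : Fin N → ℝ} (hs : Function.Injective s) (hs₀ : ∀ k, s k ≠ 0) :
    ∃ c > 0, ∃ T₁ > 0, ∀ τ ∈ Set.Ioc 0 T₁, ∀ x : Fin N → ℝ, ‖x‖ ≤ c * τ ^ N →
      ∃ w : Fin N → ℝ, ∑ k, |w k| ≤ 1 ∧ stepResponseMatrix A b s τ *ᵥ w = x := by
  obtain ⟨C, hC, T₁, hT₁, hinv⟩ := exists_norm_inv_stepResponseMatrix_le hK hs hs₀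
  have hNC : 0 ≤ (N : ℝ) * C := mul_nonneg N.cast_nonneg hC
  refine ⟨(N * C + 1)⁻¹, by positivity, T₁, hT₁, fun τ hτ x hx => ?_⟩
  obtain ⟨hunit, hnorm⟩ := hinv τ hτ
  set L := stepResponseMatrix A b s τ
  refine ⟨L⁻¹ *ᵥ x, ?_, ?_⟩
  · have hτN : 0 < τ ^ N := pow_pos hτ.1 N
    calc ∑ k, |(L⁻¹ *ᵥ x) k| ≤ N * ‖L⁻¹ *ᵥ x‖ := by
          simpa [Real.norm_eq_abs] using Pi.sum_norm_apply_le_norm (L⁻¹ *ᵥ x)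
      _ ≤ N * (C / τ ^ N * ((N * C + 1)⁻¹ * τ ^ N)) := by
          gcongr
          exact (linfty_opNorm_mulVec _ _).trans (by gcongr)
      _ = N * C * (N * C + 1)⁻¹ := by field_simp
      _ ≤ 1 := by
          rw [mul_inv_le_iff₀ (by positivity)]
          linarith
  · rw [mulVec_mulVec, mul_nonsing_inv _ ((isUnit_iff_isUnit_det L).1 hunit), one_mulVec]

theorem sum_smul_integral_mem_linReach {N M : ℕ} (A : Matrix (Fin N) (Fin N) ℝ)
    (B : Matrix (Fin N) (Fin M) ℝ) (j : Fin M) {ι : Type*} [Fintype ι] {T : ℝ} {t : ι → ℝ}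
    (ht : ∀ k, t k ∈ Set.Icc 0 T) {w : ι → ℝ} (hw : ∑ k, |w k| ≤ 1) :
    ∑ k, w k • ∫ σ in (0 : ℝ)..t k, NormedSpace.exp (σ • A) *ᵥ (fun i => B i j)
      ∈ linReach N M A B T := by
  set f : ℝ → Fin N → ℝ := fun σ => NormedSpace.exp (σ • A) *ᵥ (fun i => B i j)
  have hf : Continuous f :=
    (NormedSpace.exp_continuous.comp (continuous_id.smul continuous_const)).matrix_mulVec
      continuous_const
  set g : ℝ → ℝ := fun s => ∑ k, (Set.Ioc (T - t k) T).indicator (fun _ => w k) s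
  have hg : ∀ s, |g s| ≤ 1 := fun s =>
    (abs_sum_le_sum_abs _ _).trans <| (sum_le_sum fun k _ => by
      simpa only [Real.norm_eq_abs] using norm_indicator_le_norm_self (fun _ => w k) s).trans hw
  have hgmeas : Measurable g :=
    Finset.measurable_sum _ fun k _ => measurable_const.indicator measurableSet_Ioc
  refine ⟨fun s => Pi.single j (g s), ⟨(measurable_update 0).comp hgmeas, fun s i => ?_⟩, ?_⟩
  · rcases eq_or_ne i j with rfl | hij
    · simp only [Pi.single_eq_same]; exact abs_le.1 (hg s)
    · simp [Pi.single_eq_of_ne hij]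
  have hintegrand : ∀ s, NormedSpace.exp ((T - s) • A) *ᵥ (B *ᵥ Pi.single j (g s)) =
      ∑ k, (Set.Ioc (T - t k) T).indicator (fun s => w k • f (T - s)) s := by
    intro s
    have hcol : B *ᵥ Pi.single j (g s) = g s • fun i => B i j := by
      ext i; simp [mul_comm]
    rw [hcol, mulVec_smul, Finset.sum_smul]
    refine Finset.sum_congr rfl fun k _ => ?_
    by_cases hs : s ∈ Set.Ioc (T - t k) T <;> simp [hs, f]
  simp_rw [hintegrand]
  rw [intervalIntegral.integral_finsetSum fun k _ => ?_]
  · exact Finset.sum_congr rfl fun k _ => by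
      rw [integral_indicator_Ioc_comp_sub (fun σ => w k • f σ) (ht k),
        intervalIntegral.integral_smul]
  · exact (((hf.comp (continuous_sub_left T)).const_smul (w k)).integrableOn_uIcc.indicator
      measurableSet_Ioc).intervalIntegrable

theorem linear_reachable_set_contains_ball_general
    (N M : ℕ) (hM1 : 1 ≤ M)
    (A : Matrix (Fin N) (Fin N) ℝ) (B : Matrix (Fin N) (Fin M) ℝ)
    (hnormal : ∀ j : Fin M, (kalman A (fun i => B i j)).rank = N)
    (T₀ : ℝ) :
    ∃ γ' : ℝ, 0 < γ' ∧ ∀ T : ℝ, 0 < T → T ≤ T₀ →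
      {x : Fin N → ℝ | euNorm x ≤ γ' * T ^ N} ⊆ linReach N M A B T := by
  set j : Fin M := ⟨0, hM1⟩
  set s : Fin N → ℝ := fun k => ((k : ℕ) + 1 : ℝ)⁻¹
  have hs : Function.Injective s := fun a b h => by simpa [s, Fin.val_inj] using h
  have hs₀ : ∀ k, s k ∈ Set.Ioc 0 1 := fun k => ⟨by positivity, inv_le_one_of_one_le₀ (by simp)⟩
  obtain ⟨c, hc, T₁, hT₁, hball⟩ := exists_stepResponseMatrix_mulVec_eq_of_norm_le
    (Matrix.isUnit_of_rank_eq_card ((hnormal j).trans (Fintype.card_fin N).symm)) hs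
    (fun k => (hs₀ k).1.ne')
  set ρ := max 1 (T₀ / T₁)
  refine ⟨c / ρ ^ N, by positivity, fun T hT hTT₀ x hx => ?_⟩
  have hTτ : T / ρ ≤ min T T₁ := by
    rw [div_le_iff₀ (by positivity)]
    rcases le_total T T₁ with h | h
    · rw [min_eq_left h]; nlinarith [le_max_left 1 (T₀ / T₁)]
    · rw [min_eq_right h, ← div_le_iff₀' hT₁]
      exact (div_le_div_of_nonneg_right hTT₀ hT₁.le).trans (le_max_right _ _)
  set τ := min T T₁
  have hτ : τ ∈ Set.Ioc 0 T₁ := ⟨lt_min hT hT₁, min_le_right _ _⟩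
  obtain ⟨w, hw, rfl⟩ := hball τ hτ x <|
    calc ‖x‖ ≤ c / ρ ^ N * T ^ N := (norm_le_euNorm x).trans hx
      _ = c * (T / ρ) ^ N := by rw [div_pow]; ring
      _ ≤ c * τ ^ N := by gcongr
  rw [stepResponseMatrix_mulVec]
  exact sum_smul_integral_mem_linReach A B j (fun k => ⟨by positivity [(hs₀ k).1, hτ.1],
    (mul_le_of_le_one_left hτ.1.le (hs₀ k).2).trans (min_le_left _ _)⟩) hw

/-- for a normal linear system, for every `T₀ > 0` there is
`γ' > 0` such that for every `0 < T ≤ T₀` the closed Euclidean ball of radius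
`γ' T^N` centered at the origin is contained in the reachable set `𝓡^T`. -/
theorem linear_reachable_set_contains_ball
    (N M : ℕ) (hN : 2 ≤ N) (hM1 : 1 ≤ M) (hMN : M ≤ N)
    (A : Matrix (Fin N) (Fin N) ℝ) (B : Matrix (Fin N) (Fin M) ℝ)
    (hnormal : ∀ j : Fin M, (kalman A (fun i => B i j)).rank = N)
    (T₀ : ℝ) (hT₀ : 0 < T₀) :
    ∃ γ' : ℝ, 0 < γ' ∧ ∀ T : ℝ, 0 < T → T ≤ T₀ →
      {x : Fin N → ℝ | euNorm x ≤ γ' * T ^ N} ⊆ linReach N M A B T :=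
  linear_reachable_set_contains_ball_general N M hM1 A B hnormal T₀
end
end

section
/- Fix N ≥ 2 and T > 0. Consider the single-input linear system in ℝ^N given by ẋ_i = x_{i+1} for i = 1, …, N−1 and ẋ_N = u with u(t) ∈ [−1,1], starting from the origin (equivalently, the scalar equation x^{(N)} = u). Let X_1(·) be the trajectory corresponding to u ≡ 1 and, for 0 < s < T, let X_s(·) be the trajectory corresponding to the control equal to 1 on (0,s) and to −1 on (s,T). Then the first component satisfies ⟨e_1, X_s(T) − X_1(T)⟩ = −(2/N!. )(T−s)^N and the last component satisfies ⟨e_N, X_s(T) − X_1(T)⟩ = −2(T−s), so that ‖X_s(T) − X_1(T)‖ ≥ 2(T−s). Consequently, for every γ > 0 and every real p with 1 ≤ p < N there exists s ∈ (0,T) such that ⟨e_1, X_s(T) − X_1(T)⟩ > −γ ‖X_s(T) − X_1(T)‖^p; hence the exponent N in the strict convexity estimate ⟨ζ, y−x⟩ ≤ −γ‖ζ‖‖y−x‖^N for reachable sets of normal linear systems is optimal. -/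
noncomputable section
open MeasureTheory

/-- A trajectory of the companion system of `x^{(N)} = u` on `[0,T]`:
`ẋ_i = x_{i+1}` for `i < N-1`, `ẋ_{N-1} = u`, `x(0) = 0`, written in
absolutely continuous (integral) form. -/
def IsCompanionTraj (N : ℕ) (T : ℝ) (u : ℝ → ℝ) (x : ℝ → Fin N → ℝ) : Prop :=
  Continuous x ∧ x 0 = 0 ∧
    ∀ τ ∈ Set.Icc (0 : ℝ) T, ∀ i : Fin N,
      x τ i = ∫ t in (0:ℝ)..τ, (if h : (i : ℕ) + 1 < N then x t ⟨(i : ℕ) + 1, h⟩ else u t)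

/-! The two controls differ by `-2` times the indicator of `[s, ∞)`, so by linearity the
difference of the trajectories is the trajectory of that control, whose `i`-th coordinate is the
`(N - i)`-fold primitive `-2 (t - s)₊^(N-i) / (N-i)!`. At time `T` the first coordinate is
`-2 (T - s)^N / N!` and the last is `-2 (T - s)`, which bounds the norm from below; as `s → T`
the first is of order `(T - s)^N`, hence small against
`‖X_s(T) - X_1(T)‖^p ≥ (2 (T - s))^p` whenever `p < N`. -/

open Set Filter Topology

/-- The truncated power `(t - s)₊^m / m!`; for `m = 0` it is the indicator of `[s, ∞)`. -/
def truncatedPower (s : ℝ) (m : ℕ) (t : ℝ) : ℝ :=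
  if s ≤ t then (t - s) ^ m / m.factorial else 0

section TruncatedPower

variable (s : ℝ) (m : ℕ)

theorem monotone_truncatedPower : Monotone (truncatedPower s m) := by
  intro a b hab
  unfold truncatedPower
  split_ifs with ha hb hb
  · gcongr
  · exact absurd (ha.trans hab) hb
  · exact div_nonneg (pow_nonneg (by linarith) m) (Nat.cast_nonneg _)
  · exact le_rfl

theorem continuous_truncatedPower_succ : Continuous (truncatedPower s (m + 1)) :=
  continuous_if_le continuous_const continuous_id (by fun_prop) continuousOn_const
    fun t ht => by simp [ht]

/-- A right derivative: at `t = s` and `m = 0` the two-sided derivative does not exist. -/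
theorem hasDerivWithinAt_truncatedPower_succ (t : ℝ) :
    HasDerivWithinAt (truncatedPower s (m + 1)) (truncatedPower s m t) (Ioi t) t := by
  by_cases hst : s ≤ t
  · have hpoly : HasDerivAt (fun y => (y - s) ^ (m + 1) / (m + 1).factorial)
        ((t - s) ^ m / m.factorial) t := by
      refine (((hasDerivAt_pow (m + 1) (t - s)).comp_sub_const t s).div_const _).congr_deriv ?_
      rw [Nat.add_sub_cancel, Nat.factorial_succ]
      push_cast
      field_simp
    rw [truncatedPower, if_pos hst]
    refine hpoly.hasDerivWithinAt.congr (fun y hy => ?_) ?_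
    · exact if_pos (hst.trans hy.le)
    · exact if_pos hst
  · have hzero : truncatedPower s (m + 1) =ᶠ[𝓝 t] fun _ => 0 := by
      filter_upwards [Iio_mem_nhds (not_le.mp hst)] with y hy
      exact if_neg (not_le.mpr hy)
    rw [truncatedPower, if_neg hst]
    exact ((hasDerivAt_const t (0 : ℝ)).congr_of_eventuallyEq hzero).hasDerivWithinAt

theorem integral_truncatedPower {s : ℝ} (hs : 0 ≤ s) (m : ℕ) (τ : ℝ) :
    ∫ t in (0 : ℝ)..τ, truncatedPower s m t = truncatedPower s (m + 1) τ := by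
  have hstart : truncatedPower s (m + 1) 0 = 0 := by
    unfold truncatedPower
    split_ifs with h
    · simp [le_antisymm h hs]
    · rfl
  rw [intervalIntegral.integral_eq_sub_of_hasDeriv_right
    (continuous_truncatedPower_succ s m).continuousOn
    (fun t _ => hasDerivWithinAt_truncatedPower_succ s m t)
    ((monotone_truncatedPower s m).intervalIntegrable), hstart, sub_zero]

end TruncatedPower

theorem euNorm_ge_abs_apply {N : ℕ} (x : Fin N → ℝ) (i : Fin N) : |x i| ≤ euNorm x := by
  rw [euNorm, ← Real.sqrt_sq_eq_abs]
  exact Real.sqrt_le_sqrt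
    (Finset.single_le_sum (f := fun j => x j ^ 2) (fun j _ => sq_nonneg _) (Finset.mem_univ i))

namespace IsCompanionTraj

variable {N : ℕ} {T : ℝ}

theorem sub {u v : ℝ → ℝ} {x y : ℝ → Fin N → ℝ}
    (hx : IsCompanionTraj N T u x) (hy : IsCompanionTraj N T v y)
    (hu : IntervalIntegrable u volume 0 T) (hv : IntervalIntegrable v volume 0 T) :
    IsCompanionTraj N T (u - v) (x - y) := by
  refine ⟨hx.1.sub hy.1, by simp [hx.2.1, hy.2.1], fun τ hτ i => ?_⟩
  have hsub : uIcc 0 τ ⊆ uIcc 0 T :=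
    uIcc_subset_uIcc_left (by simp [uIcc_of_le, hτ.1, hτ.1.trans hτ.2, hτ.2])
  rw [Pi.sub_apply, Pi.sub_apply, hx.2.2 τ hτ i, hy.2.2 τ hτ i]
  by_cases hnext : (i : ℕ) + 1 < N
  · simp only [dif_pos hnext, Pi.sub_apply]
    exact (intervalIntegral.integral_sub
      (((continuous_apply _).comp hx.1).intervalIntegrable 0 τ)
      (((continuous_apply _).comp hy.1).intervalIntegrable 0 τ)).symm
  · simp only [dif_neg hnext, Pi.sub_apply]
    exact (intervalIntegral.integral_sub (hu.mono_set hsub) (hv.mono_set hsub)).symm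

theorem apply_eq_truncatedPower {a s : ℝ} (hs : 0 ≤ s) {x : ℝ → Fin N → ℝ}
    (hx : IsCompanionTraj N T (fun t => a * truncatedPower s 0 t) x)
    {τ : ℝ} (hτ : τ ∈ Icc 0 T) (i : Fin N) :
    x τ i = a * truncatedPower s (N - i) τ := by
  suffices h : ∀ k, ∀ i : Fin N, (i : ℕ) + k + 1 = N →
      ∀ τ ∈ Icc 0 T, x τ i = a * truncatedPower s (k + 1) τ by
    obtain ⟨k, hk⟩ : ∃ k, N - i = k + 1 := ⟨N - i - 1, by omega⟩
    exact hk ▸ h k i (by omega) τ hτ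
  intro k
  induction k with
  | zero =>
    intro i hi τ hτ
    have hlast : ¬ (i : ℕ) + 1 < N := by omega
    rw [hx.2.2 τ hτ i]
    simp only [dif_neg hlast]
    rw [intervalIntegral.integral_const_mul, integral_truncatedPower hs]
  | succ k ih =>
    intro i hi τ hτ
    have hnext : (i : ℕ) + 1 < N := by omega
    rw [hx.2.2 τ hτ i]
    simp only [dif_pos hnext]
    rw [intervalIntegral.integral_congr (g := fun t => a * truncatedPower s (k + 1) t),
      intervalIntegral.integral_const_mul, integral_truncatedPower hs]
    intro t ht
    rw [uIcc_of_le hτ.1] at ht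
    exact ih ⟨i + 1, hnext⟩ (by simp only; omega) t ⟨ht.1, ht.2.trans hτ.2⟩

theorem apply_sub_of_switch {s : ℝ} (hs : s ∈ Icc 0 T) {x y : ℝ → Fin N → ℝ}
    (hx : IsCompanionTraj N T (fun t => if t < s then 1 else -1) x)
    (hy : IsCompanionTraj N T (fun _ => 1) y) (i : Fin N) :
    (x T - y T) i = -2 * ((T - s) ^ (N - i) / (N - i).factorial) := by
  have hctrl : ((fun t => if t < s then 1 else -1) - fun _ => (1 : ℝ)) =
      fun t => -2 * truncatedPower s 0 t := by
    funext t
    by_cases hst : s ≤ t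
    · simp [truncatedPower, hst, not_lt.2 hst]
      norm_num
    · simp [truncatedPower, hst, not_le.1 hst]
  have hswitch : Antitone fun t => if t < s then (1 : ℝ) else -1 := by
    intro a b hab
    dsimp only
    split_ifs <;> linarith
  have hdiff := hctrl ▸ hx.sub hy hswitch.intervalIntegrable intervalIntegrable_const
  have h := hdiff.apply_eq_truncatedPower hs.1 ⟨hs.1.trans hs.2, le_rfl⟩ i
  rwa [truncatedPower, if_pos hs.2] at h

section Switch

variable (hN : 0 < N) {s : ℝ} (hs : s ∈ Icc 0 T) {x y : ℝ → Fin N → ℝ}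
  (hx : IsCompanionTraj N T (fun t => if t < s then 1 else -1) x)
  (hy : IsCompanionTraj N T (fun _ => 1) y)
include hN hs hx hy

theorem apply_zero_sub_of_switch :
    (x T - y T) ⟨0, hN⟩ = -(2 / (N.factorial : ℝ)) * (T - s) ^ N := by
  rw [hx.apply_sub_of_switch hs hy, Fin.val_mk, Nat.sub_zero]
  ring

theorem apply_last_sub_of_switch : (x T - y T) ⟨N - 1, by omega⟩ = -2 * (T - s) := by
  rw [hx.apply_sub_of_switch hs hy, Fin.val_mk, Nat.sub_sub_self hN]
  simp

theorem two_mul_sub_le_euNorm_sub_of_switch : 2 * (T - s) ≤ euNorm (x T - y T) := by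
  have h := euNorm_ge_abs_apply (x T - y T) ⟨N - 1, by omega⟩
  rwa [hx.apply_last_sub_of_switch hN hs hy, abs_of_nonpos (by linarith [hs.2]), neg_mul,
    neg_neg] at h

end Switch

end IsCompanionTraj

theorem exists_mem_Ioo_mul_rpow_lt_mul_rpow {C γ T p q : ℝ} (hpq : p < q) (hγ : 0 < γ)
    (hT : 0 < T) : ∃ ε ∈ Ioo 0 T, C * ε ^ q < γ * ε ^ p := by
  have hlim : Tendsto (fun ε : ℝ => C * ε ^ (q - p)) (𝓝[>] 0) (𝓝 0) := by
    have hcont := Real.continuousAt_rpow_const 0 (q - p) (Or.inr (sub_pos.2 hpq).le)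
    have h := (hcont.tendsto.const_mul C).mono_left (nhdsWithin_le_nhds (s := Ioi 0))
    rwa [Real.zero_rpow (sub_pos.2 hpq).ne', mul_zero] at h
  obtain ⟨ε, hsmall, hε⟩ :=
    ((hlim.eventually (gt_mem_nhds hγ)).and (Ioo_mem_nhdsGT hT)).exists
  refine ⟨ε, hε, ?_⟩
  calc C * ε ^ q = C * ε ^ (q - p) * ε ^ p := by
        rw [mul_assoc, ← Real.rpow_add hε.1, sub_add_cancel]
    _ < γ * ε ^ p := mul_lt_mul_of_pos_right hsmall (Real.rpow_pos_of_pos hε.1 p)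

/-- optimality of the exponent `N`.  For the system
`x^{(N)} = u`, let `X1` be the trajectory of the control `u ≡ 1` and, for
`0 < s < T`, let `X s` be the trajectory of the control equal to `1` on
`(0,s)` and `-1` on `(s,T)`.  Then
`⟨e₁, X s T - X1 T⟩ = -(2/N!) (T-s)^N`, `⟨e_N, X s T - X1 T⟩ = -2(T-s)`,
hence `‖X s T - X1 T‖ ≥ 2(T-s)`; consequently for every `γ > 0` and every
real `1 ≤ p < N` there is `s ∈ (0,T)` with
`⟨e₁, X s T - X1 T⟩ > -γ ‖X s T - X1 T‖^p`. -/
theorem exponent_N_is_optimal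
    (N : ℕ) (hN : 2 ≤ N) (T : ℝ) (hT : 0 < T)
    (X1 : ℝ → Fin N → ℝ) (X : ℝ → ℝ → Fin N → ℝ)
    (hX1 : IsCompanionTraj N T (fun _ => 1) X1)
    (hX : ∀ s ∈ Set.Ioo (0 : ℝ) T,
      IsCompanionTraj N T (fun t => if t < s then 1 else -1) (X s)) :
    (∀ s ∈ Set.Ioo (0 : ℝ) T,
      (X s T - X1 T) ⟨0, by omega⟩ = -(2 / (N.factorial : ℝ)) * (T - s) ^ N ∧
      (X s T - X1 T) ⟨N - 1, by omega⟩ = -2 * (T - s) ∧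
      2 * (T - s) ≤ euNorm (X s T - X1 T)) ∧
    ∀ γ : ℝ, 0 < γ → ∀ p : ℝ, 1 ≤ p → p < N →
      ∃ s ∈ Set.Ioo (0 : ℝ) T,
        -γ * euNorm (X s T - X1 T) ^ p < (X s T - X1 T) ⟨0, by omega⟩ := by
  have hN : 0 < N := by omega
  have hsT : ∀ s ∈ Ioo (0 : ℝ) T, s ∈ Icc 0 T := fun s hs => Ioo_subset_Icc_self hs
  refine ⟨fun s hs => ⟨(hX s hs).apply_zero_sub_of_switch hN (hsT s hs) hX1,
    (hX s hs).apply_last_sub_of_switch hN (hsT s hs) hX1,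
    (hX s hs).two_mul_sub_le_euNorm_sub_of_switch hN (hsT s hs) hX1⟩, fun γ hγ p hp hpN => ?_⟩
  obtain ⟨ε, hε, hsmall⟩ := exists_mem_Ioo_mul_rpow_lt_mul_rpow (C := 2 / N.factorial) hpN
    (mul_pos hγ (Real.rpow_pos_of_pos two_pos p)) hT
  have hs : T - ε ∈ Ioo 0 T := ⟨by linarith [hε.2], by linarith [hε.1]⟩
  have hfirst := (hX _ hs).apply_zero_sub_of_switch hN (hsT _ hs) hX1
  have h2ε := (hX _ hs).two_mul_sub_le_euNorm_sub_of_switch hN (hsT _ hs) hX1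
  refine ⟨T - ε, hs, ?_⟩
  rw [sub_sub_cancel] at hfirst h2ε
  rw [hfirst, ← Real.rpow_natCast]
  suffices 2 / N.factorial * ε ^ (N : ℝ) < γ * euNorm (X (T - ε) T - X1 T) ^ p by linarith
  calc 2 / N.factorial * ε ^ (N : ℝ) < γ * 2 ^ p * ε ^ p := hsmall
    _ = γ * (2 * ε) ^ p := by rw [Real.mul_rpow zero_le_two hε.1.le, mul_assoc]
    _ ≤ γ * euNorm (X (T - ε) T - X1 T) ^ p := by
      gcongr
      linarith [hε.1]
end
end

section
/- Consider the two-dimensional control system ẋ₁(t) = x₂(t)(1 + u(t)), ẋ₂(t) = u(t), x(0) = 0, with measurable controls u valued in [−1,1] (i.e., F(x₁,x₂) = (x₂, 0) and G(x₁,x₂) = (x₂, 1), which satisfy F(0) = 0 and rank[G(0), DF(0)G(0)] = 2 but not DG(0) = 0). For τ > 0 let 𝓡^τ be the reachable set from the origin at time τ. Then for every 0 < s < 1 the point γ(s) = (s²τ², τ(2s − 1)) belongs to 𝓡^τ (reached by the control equal to 1 on (0, sτ) and −1 on (sτ, τ)), the point γ(1/2) belongs to the boundary of 𝓡^τ, and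 with ζ = (2, −τ)/√(4 + τ²) one has ⟨ζ, γ(s) − γ(1/2)⟩ = 2τ²(s − 1/2)²/√(4 + τ²) > 0 for s ≠ 1/2. Consequently, the reachable set 𝓡^τ is not convex for any τ > 0. -/
noncomputable section
open MeasureTheory

/-- Carathéodory trajectory (in integral form) of `ẏ = F(y) + G(y)u`,
`y(0) = x₀`, on `[0,τ]`; the columns of `G` are `G i`. -/
def IsNLTraj {N M : ℕ} (F : (Fin N → ℝ) → Fin N → ℝ)
    (G : Fin M → (Fin N → ℝ) → Fin N → ℝ) (τ : ℝ) (u : ℝ → Fin M → ℝ)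
    (x₀ : Fin N → ℝ) (y : ℝ → Fin N → ℝ) : Prop :=
  Continuous y ∧ y 0 = x₀ ∧
    ∀ t ∈ Set.Icc (0 : ℝ) τ,
      y t = x₀ + ∫ r in (0:ℝ)..t, (F (y r) + ∑ i, u r i • G i (y r))

/-- The reachable set from the origin at time `τ`. -/
def nlReach {N M : ℕ} (F : (Fin N → ℝ) → Fin N → ℝ)
    (G : Fin M → (Fin N → ℝ) → Fin N → ℝ) (τ : ℝ) : Set (Fin N → ℝ) :=
  {p | ∃ u y, IsAdmissible M u ∧ IsNLTraj F G τ u 0 y ∧ p = y τ}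

/-- The proximal normal cone to `K` at `x`. -/
def proxNormalCone {N : ℕ} (K : Set (Fin N → ℝ)) (x : Fin N → ℝ) : Set (Fin N → ℝ) :=
  {v | ∃ σ : ℝ, 0 ≤ σ ∧ ∀ y ∈ K, euDot v (y - x) ≤ σ * euNorm (y - x) ^ 2}

/-!
Along a trajectory of `ẋ₁ = x₂ (1 + u)`, `ẋ₂ = u`, integration by parts for the absolutely
continuous `x₂` gives `∫₀^τ x₂ u = x₂(τ)² / 2`, so `x₁(τ) = ∫₀^τ x₂ + x₂(τ)² / 2`. Since `x₂` is
`1`-Lipschitz with `x₂(0) = 0`, the integral is at most `(τ² + 2 τ x₂(τ) - x₂(τ)²) / 4`. Hence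
every reachable point satisfies `2 x₁ - τ x₂ ≤ (τ² + x₂²) / 2`, with equality along the
bang-bang curve `γ`. The midpoint of `γ(1/4)` and `γ(3/4)` violates this bound, and so do the
points `γ(1/2) + (δ, 0)`, `δ > 0`.
-/

open Set Filter

theorem IsAdmissible.intervalIntegrable_apply {M : ℕ} {u : ℝ → Fin M → ℝ}
    (hu : IsAdmissible M u) (i : Fin M) (a b : ℝ) :
    IntervalIntegrable (fun r => u r i) volume a b := by
  refine (intervalIntegrable_iff.2 <| Measure.integrableOn_of_bounded (M := 1)
    measure_Ioc_lt_top.ne ((measurable_pi_apply i).comp hu.1).aestronglyMeasurable ?_)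
  exact .of_forall fun r => abs_le.2 (hu.2 r i)

section Trajectories

variable {N M : ℕ} {F : (Fin N → ℝ) → Fin N → ℝ} {G : Fin M → (Fin N → ℝ) → Fin N → ℝ}
  {τ : ℝ} {u : ℝ → Fin M → ℝ} {y : ℝ → Fin N → ℝ}

theorem IsAdmissible.intervalIntegrable_field (hu : IsAdmissible M u) (hF : Continuous F)
    (hG : ∀ i, Continuous (G i)) (hy : Continuous y) (a b : ℝ) :
    IntervalIntegrable (fun r => F (y r) + ∑ i, u r i • G i (y r)) volume a b :=
  (hF.comp hy).intervalIntegrable a b |>.add <| by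
    have := IntervalIntegrable.sum Finset.univ fun i _ =>
      (hu.intervalIntegrable_apply i a b).smul_continuousOn ((hG i).comp hy).continuousOn
    simpa only [Finset.sum_fn, Function.comp_apply] using this

theorem IsNLTraj.apply_eq {x₀ : Fin N → ℝ} (hy : IsNLTraj F G τ u x₀ y) {t : ℝ}
    (ht : t ∈ Icc 0 τ)
    (hint : IntervalIntegrable (fun r => F (y r) + ∑ i, u r i • G i (y r)) volume 0 t)
    (j : Fin N) :
    y t j = x₀ j + ∫ r in (0:ℝ)..t, (F (y r) + ∑ i, u r i • G i (y r)) j := by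
  rw [hy.2.2 t ht, Pi.add_apply]
  exact congrArg _ ((ContinuousLinearMap.proj (R := ℝ) j).intervalIntegral_comp_comm hint).symm

theorem isNLTraj_of_hasDerivWithinAt_Ioi (hy : Continuous y)
    (hderiv : ∀ t ∈ Ico 0 τ, HasDerivWithinAt y (F (y t) + ∑ i, u t i • G i (y t)) (Ioi t) t)
    (hint : IntervalIntegrable (fun r => F (y r) + ∑ i, u r i • G i (y r)) volume 0 τ) :
    IsNLTraj F G τ u (y 0) y := by
  refine ⟨hy, rfl, fun t ht => ?_⟩
  rw [intervalIntegral.integral_eq_sub_of_hasDeriv_right_of_le ht.1 hy.continuousOn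
    (fun r hr => hderiv r ⟨hr.1.le, hr.2.trans_le ht.2⟩)
    (hint.mono_set (uIcc_subset_uIcc_left (by simpa [uIcc_of_le (ht.1.trans ht.2)] using ht)))]
  abel

end Trajectories

theorem integral_primitive_mul_self {u : ℝ → ℝ} {a b : ℝ}
    (hu : IntervalIntegrable u volume a b) :
    ∫ t in a..b, (∫ r in a..t, u r) * u t = (∫ r in a..b, u r) ^ 2 / 2 := by
  set W : ℝ → ℝ := fun x => ∫ r in a..x, u r
  have hW := hu.absolutelyContinuousOnInterval_intervalIntegral left_mem_uIcc
  have hderiv : ∀ᵐ x, x ∈ uIoc a b → deriv W x = u x := by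
    filter_upwards [hu.ae_hasDerivAt_integral] with x hx hxab
    exact (hx (uIoc_subset_uIcc hxab) a left_mem_uIcc).deriv
  have key := hW.integral_deriv_mul_eq_sub hW
  rw [intervalIntegral.integral_congr_ae (g := fun x => 2 * (W x * u x))
    (by filter_upwards [hderiv] with x hx hxab; rw [hx hxab]; ring),
    intervalIntegral.integral_const_mul] at key
  simp only [W, intervalIntegral.integral_same, mul_zero, sub_zero] at key
  linarith

theorem lipschitzWith_one_primitive {u : ℝ → ℝ} (hu : ∀ a b, IntervalIntegrable u volume a b)
    (hu1 : ∀ r, |u r| ≤ 1) (a : ℝ) : LipschitzWith 1 (fun x => ∫ r in a..x, u r) := by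
  refine LipschitzWith.of_dist_le_mul fun x y => ?_
  rw [Real.dist_eq, intervalIntegral.integral_interval_sub_left (hu a x) (hu a y), NNReal.coe_one,
    one_mul, Real.dist_eq, ← one_mul |x - y|]
  exact intervalIntegral.norm_integral_le_of_norm_le_const fun r _ =>
    (Real.norm_eq_abs _).trans_le (hu1 r)

theorem integral_le_of_lipschitzOnWith_one {f : ℝ → ℝ} {τ : ℝ} (hτ : 0 ≤ τ)
    (hf : LipschitzOnWith 1 f (Icc 0 τ)) (hf0 : f 0 = 0) :
    ∫ t in (0:ℝ)..τ, f t ≤ (τ ^ 2 + 2 * τ * f τ - f τ ^ 2) / 4 := by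
  set a := f τ
  have hdist : ∀ s ∈ Icc 0 τ, ∀ t ∈ Icc 0 τ, |f s - f t| ≤ |s - t| := fun s hs t ht => by
    simpa [Real.dist_eq] using hf.dist_le_mul s hs t ht
  have hle_id : ∀ t ∈ Icc 0 τ, f t ≤ t := fun t ht => by
    have := hdist t ht 0 ⟨le_rfl, hτ⟩
    rw [hf0, sub_zero, sub_zero, abs_of_nonneg ht.1] at this
    exact (le_abs_self _).trans this
  have hle_end : ∀ t ∈ Icc 0 τ, f t ≤ a + (τ - t) := fun t ht => by
    have := hdist t ht τ ⟨hτ, le_rfl⟩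
    rw [abs_sub_comm t, abs_of_nonneg (sub_nonneg.2 ht.2)] at this
    linarith [le_abs_self (f t - a)]
  have hau : a ≤ τ := hle_id τ ⟨hτ, le_rfl⟩
  have hal : f 0 ≤ a + (τ - 0) := hle_end 0 ⟨le_rfl, hτ⟩
  rw [hf0, sub_zero] at hal
  -- the two bounds cross at `c`
  set c := (a + τ) / 2
  have hc0 : 0 ≤ c := show 0 ≤ (a + τ) / 2 by linarith
  have hcτ : c ≤ τ := show (a + τ) / 2 ≤ τ by linarith
  have hfint : ∀ s t, s ∈ Icc 0 τ → t ∈ Icc 0 τ → IntervalIntegrable f volume s t :=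
    fun s t hs ht => (hf.continuousOn.mono (uIcc_subset_Icc hs ht)).intervalIntegrable
  have h₁ : ∫ t in (0:ℝ)..c, f t ≤ ∫ t in (0:ℝ)..c, t :=
    intervalIntegral.integral_mono_on hc0 (hfint 0 c ⟨le_rfl, hτ⟩ ⟨hc0, hcτ⟩)
      (continuous_id.intervalIntegrable _ _) fun t ht => hle_id t ⟨ht.1, ht.2.trans hcτ⟩
  have h₂ : ∫ t in c..τ, f t ≤ ∫ t in c..τ, (a + τ - t) :=
    intervalIntegral.integral_mono_on hcτ (hfint c τ ⟨hc0, hcτ⟩ ⟨hτ, le_rfl⟩)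
      (intervalIntegrable_const.sub (continuous_id.intervalIntegrable _ _)) fun t ht => by
        linarith [hle_end t ⟨hc0.trans ht.1, ht.2⟩]
  rw [← intervalIntegral.integral_add_adjacent_intervals (hfint 0 c ⟨le_rfl, hτ⟩ ⟨hc0, hcτ⟩)
    (hfint c τ ⟨hc0, hcτ⟩ ⟨hτ, le_rfl⟩)]
  rw [integral_id] at h₁
  rw [intervalIntegral.integral_sub intervalIntegrable_const
    (continuous_id'.intervalIntegrable _ _), intervalIntegral.integral_const, integral_id,
    smul_eq_mul] at h₂
  have : (c ^ 2 - 0 ^ 2) / 2 + ((τ - c) * (a + τ) - (τ ^ 2 - c ^ 2) / 2)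
      = (τ ^ 2 + 2 * τ * a - a ^ 2) / 4 := by ring
  linarith

theorem mem_frontier_of_forall_add_smul_notMem {E : Type*} [TopologicalSpace E] [AddCommGroup E]
    [Module ℝ E] [ContinuousAdd E] [ContinuousSMul ℝ E] {s : Set E} {p v : E} (hp : p ∈ s)
    (h : ∀ δ : ℝ, 0 < δ → p + δ • v ∉ s) : p ∈ frontier s := by
  rw [frontier_eq_closure_inter_closure]
  refine ⟨subset_closure hp, mem_closure_of_tendsto ?_
    (eventually_nhdsWithin_of_forall (a := (0 : ℝ)) (s := Ioi 0) h)⟩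
  have hcont : Continuous fun δ : ℝ => p + δ • v := by fun_prop
  exact (hcont.tendsto' 0 p (by simp)).mono_left nhdsWithin_le_nhds

def exampleF : (Fin 2 → ℝ) → Fin 2 → ℝ := fun x => ![x 1, 0]

def exampleG : Fin 1 → (Fin 2 → ℝ) → Fin 2 → ℝ := fun _ x => ![x 1, 1]

theorem continuous_exampleF : Continuous exampleF := by
  unfold exampleF; fun_prop

theorem continuous_exampleG (i : Fin 1) : Continuous (exampleG i) := by
  unfold exampleG; fun_prop

theorem exampleF_add_sum_smul_exampleG (x : Fin 2 → ℝ) (c : Fin 1 → ℝ) :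
    exampleF x + ∑ i, c i • exampleG i x = ![x 1 * (1 + c 0), c 0] := by
  ext j; fin_cases j <;> simp [exampleF, exampleG]; ring

theorem isAdmissible_bangBang (σ : ℝ) :
    IsAdmissible 1 (fun t _ => if t < σ then 1 else -1) :=
  ⟨measurable_pi_lambda _ fun _ => Measurable.ite measurableSet_Iio measurable_const
    measurable_const, fun t _ => by dsimp only; split <;> norm_num⟩

theorem isNLTraj_example_bangBang {σ : ℝ} (hσ : 0 ≤ σ) (τ : ℝ) :
    IsNLTraj exampleF exampleG τ (fun t _ => if t < σ then 1 else -1) 0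
      (fun t => ![min t σ ^ 2, 2 * min t σ - t]) := by
  have hy : Continuous fun t : ℝ => ![min t σ ^ 2, 2 * min t σ - t] := by fun_prop
  convert isNLTraj_of_hasDerivWithinAt_Ioi hy (fun t _ => ?_)
    ((isAdmissible_bangBang σ).intervalIntegrable_field continuous_exampleF continuous_exampleG
      hy 0 τ) using 1
  · ext i; fin_cases i <;> simp [hσ]
  rw [exampleF_add_sum_smul_exampleG]
  rcases lt_or_ge t σ with htσ | hσt
  · have hd : HasDerivAt (fun r : ℝ => ![r ^ 2, r]) ![2 * t, 1] t := hasDerivAt_pi.2 fun i => by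
      fin_cases i
      · simpa using hasDerivAt_pow 2 t
      · simpa using hasDerivAt_id' t
    have heq : (fun r : ℝ => ![min r σ ^ 2, 2 * min r σ - r]) =ᶠ[nhds t] fun r => ![r ^ 2, r] := by
      filter_upwards [Iio_mem_nhds htσ] with r hr
      rw [min_eq_left hr.le]; ext i; fin_cases i <;> simp; ring
    rw [if_pos htσ, Matrix.cons_val_one, Matrix.cons_val_zero, min_eq_left htσ.le,
      show (2 * t - t) * (1 + 1) = 2 * t by ring]
    exact (hd.congr_of_eventuallyEq heq).hasDerivWithinAt
  · have hd : HasDerivAt (fun r : ℝ => ![σ ^ 2, 2 * σ - r]) ![0, -1] t :=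
      hasDerivAt_pi.2 fun i => by
        fin_cases i
        · simpa using hasDerivAt_const t (σ ^ 2)
        · simpa using (hasDerivAt_id t).const_sub (2 * σ)
    have hfeq : ∀ r ≥ σ, ![min r σ ^ 2, 2 * min r σ - r] = ![σ ^ 2, 2 * σ - r] := fun r hr => by
      rw [min_eq_right hr]
    rw [if_neg (not_lt.2 hσt), add_neg_cancel, mul_zero]
    exact hd.hasDerivWithinAt.congr (fun r hr => hfeq r (hσt.trans hr.le)) (hfeq t hσt)

theorem exists_isNLTraj_example_bangBang {τ s : ℝ} (hτ : 0 ≤ τ) (hs : s ∈ Icc (0 : ℝ) 1) :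
    ∃ y, IsNLTraj exampleF exampleG τ (fun t _ => if t < s * τ then 1 else -1) 0 y ∧
      y τ = ![s ^ 2 * τ ^ 2, τ * (2 * s - 1)] := by
  have hsτ : s * τ ≤ τ := mul_le_of_le_one_left hτ hs.2
  refine ⟨_, isNLTraj_example_bangBang (mul_nonneg hs.1 hτ) τ, ?_⟩
  rw [min_eq_right hsτ]
  ext i; fin_cases i <;> simp <;> ring

theorem bangBang_endpoint_mem_nlReach_example {τ s : ℝ} (hτ : 0 ≤ τ) (hs : s ∈ Icc (0 : ℝ) 1) :
    ![s ^ 2 * τ ^ 2, τ * (2 * s - 1)] ∈ nlReach exampleF exampleG τ := by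
  obtain ⟨y, hy, hyτ⟩ := exists_isNLTraj_example_bangBang hτ hs
  exact ⟨_, y, isAdmissible_bangBang _, hy, hyτ.symm⟩

theorem two_mul_sub_le_of_mem_nlReach_example {τ : ℝ} (hτ : 0 ≤ τ) {p : Fin 2 → ℝ}
    (hp : p ∈ nlReach exampleF exampleG τ) : 2 * p 0 - τ * p 1 ≤ τ ^ 2 / 2 + p 1 ^ 2 / 2 := by
  obtain ⟨u, y, hu, hy, rfl⟩ := hp
  set v : ℝ → ℝ := fun r => u r 0
  set W : ℝ → ℝ := fun t => ∫ r in (0:ℝ)..t, v r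
  have hv : ∀ a b, IntervalIntegrable v volume a b := hu.intervalIntegrable_apply 0
  have hv1 : ∀ r, |v r| ≤ 1 := fun r => abs_le.2 (hu.2 r 0)
  have hW : LipschitzWith 1 W := lipschitzWith_one_primitive hv hv1 0
  have hcoord := fun t (ht : t ∈ Icc 0 τ) => hy.apply_eq ht
    (hu.intervalIntegrable_field continuous_exampleF continuous_exampleG hy.1 0 t)
  simp only [exampleF_add_sum_smul_exampleG, Pi.zero_apply, zero_add] at hcoord
  have hx₂ : ∀ t ∈ Icc 0 τ, y t 1 = W t := fun t ht => hcoord t ht 1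
  have hx₁ : y τ 0 = (∫ t in (0:ℝ)..τ, W t) + W τ ^ 2 / 2 := by
    rw [hcoord τ ⟨hτ, le_rfl⟩ 0, ← integral_primitive_mul_self (hv 0 τ),
      ← intervalIntegral.integral_add (hW.continuous.intervalIntegrable 0 τ)
        ((hv 0 τ).continuousOn_mul hW.continuous.continuousOn)]
    refine intervalIntegral.integral_congr fun t ht => ?_
    rw [uIcc_of_le hτ] at ht
    simp only [Matrix.cons_val_zero, hx₂ t ht, v]
    ring
  have hint := integral_le_of_lipschitzOnWith_one hτ hW.lipschitzOnWith
    intervalIntegral.integral_same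
  rw [hx₁, hx₂ τ ⟨hτ, le_rfl⟩]
  nlinarith [hint]

theorem mem_frontier_nlReach_example {τ : ℝ} (hτ : 0 ≤ τ) :
    ![(1 / 2) ^ 2 * τ ^ 2, τ * (2 * (1 / 2) - 1)] ∈ frontier (nlReach exampleF exampleG τ) := by
  refine mem_frontier_of_forall_add_smul_notMem (v := Pi.single 0 1)
    (bangBang_endpoint_mem_nlReach_example hτ ⟨by norm_num, by norm_num⟩) fun δ hδ hmem => ?_
  have hq : ![(1 / 2) ^ 2 * τ ^ 2, τ * (2 * (1 / 2) - 1)] + δ • Pi.single 0 1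
      = ![τ ^ 2 / 4 + δ, 0] := by
    ext i; fin_cases i <;> simp; ring
  have := two_mul_sub_le_of_mem_nlReach_example hτ (hq ▸ hmem)
  simp only [Matrix.cons_val_zero, Matrix.cons_val_one] at this
  nlinarith

theorem not_convex_nlReach_example {τ : ℝ} (hτ : 0 < τ) :
    ¬ Convex ℝ (nlReach exampleF exampleG τ) := by
  intro hconv
  have hmid : (1 / 2 : ℝ) • ![(1 / 4) ^ 2 * τ ^ 2, τ * (2 * (1 / 4) - 1)]
      + (1 / 2 : ℝ) • ![(3 / 4) ^ 2 * τ ^ 2, τ * (2 * (3 / 4) - 1)] = ![5 * τ ^ 2 / 16, 0] := by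
    ext i; fin_cases i <;> simp <;> ring
  have := two_mul_sub_le_of_mem_nlReach_example hτ.le <| hmid ▸ hconv
    (bangBang_endpoint_mem_nlReach_example hτ.le ⟨by norm_num, by norm_num⟩)
    (bangBang_endpoint_mem_nlReach_example hτ.le ⟨by norm_num, by norm_num⟩)
    (by norm_num) (by norm_num) (by norm_num)
  simp only [Matrix.cons_val_zero, Matrix.cons_val_one] at this
  nlinarith

/-- the system `ẋ₁ = x₂(1+u)`, `ẋ₂ = u`, `u ∈ [-1,1]`: the curve
`γ(s) = (s²τ², τ(2s-1))` lies in `𝓡^τ`, `γ(1/2)` is a boundary point, and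
the outer normal `ζ = (2,-τ)/√(4+τ²)` at `γ(1/2)` satisfies
`⟨ζ, γ(s) - γ(1/2)⟩ = 2τ²(s-1/2)²/√(4+τ²) > 0` for `s ≠ 1/2`; hence `𝓡^τ` is
not convex, for any `τ > 0`. -/
theorem example_reachable_set_not_convex
    (F : (Fin 2 → ℝ) → Fin 2 → ℝ) (hF : F = fun x => ![x 1, 0])
    (G : Fin 1 → (Fin 2 → ℝ) → Fin 2 → ℝ) (hG : G = fun _ x => ![x 1, 1])
    (τ : ℝ) (hτ : 0 < τ)
    (γ : ℝ → Fin 2 → ℝ) (hγ : γ = fun s => ![s ^ 2 * τ ^ 2, τ * (2 * s - 1)])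
    (ζ : Fin 2 → ℝ)
    (hζ : ζ = ![2 / Real.sqrt (4 + τ ^ 2), -τ / Real.sqrt (4 + τ ^ 2)]) :
    (∀ s ∈ Set.Ioo (0 : ℝ) 1,
      (∃ y, IsNLTraj F G τ (fun t _ => if t < s * τ then 1 else -1) 0 y ∧ y τ = γ s) ∧
      γ s ∈ nlReach F G τ) ∧
    γ (1 / 2) ∈ frontier (nlReach F G τ) ∧
    (∀ s ∈ Set.Ioo (0 : ℝ) 1,
      euDot ζ (γ s - γ (1 / 2)) = 2 * τ ^ 2 * (s - 1 / 2) ^ 2 / Real.sqrt (4 + τ ^ 2) ∧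
      (s ≠ 1 / 2 → 0 < euDot ζ (γ s - γ (1 / 2)))) ∧
    ¬ Convex ℝ (nlReach F G τ) := by
  obtain rfl : F = exampleF := hF
  obtain rfl : G = exampleG := hG
  subst hγ hζ
  refine ⟨fun s hs => ⟨exists_isNLTraj_example_bangBang hτ.le (Ioo_subset_Icc_self hs),
    bangBang_endpoint_mem_nlReach_example hτ.le (Ioo_subset_Icc_self hs)⟩,
    mem_frontier_nlReach_example hτ.le, fun s _ => ?_, not_convex_nlReach_example hτ⟩
  have hdot : euDot ![2 / Real.sqrt (4 + τ ^ 2), -τ / Real.sqrt (4 + τ ^ 2)]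
      (![s ^ 2 * τ ^ 2, τ * (2 * s - 1)] - ![(1 / 2) ^ 2 * τ ^ 2, τ * (2 * (1 / 2) - 1)])
      = 2 * τ ^ 2 * (s - 1 / 2) ^ 2 / Real.sqrt (4 + τ ^ 2) := by
    simp only [euDot, Fin.sum_univ_two, Pi.sub_apply, Matrix.cons_val_zero, Matrix.cons_val_one]
    ring
  refine ⟨hdot, fun hs => ?_⟩
  rw [hdot]
  have := sub_ne_zero.2 hs
  have := Real.sqrt_pos.2 (show (0 : ℝ) < 4 + τ ^ 2 by positivity)
  positivity
end
end

section
/- Let N ≥ 2, 1 ≤ M ≤ N, and let F : ℝ^N → ℝ^N and G : ℝ^N → ℝ^{N×M} be Lipschitz. For τ > 0 let 𝓡_τ = {z ∈ ℝ^N : T(z) ≤ τ} be the sublevel set of the minimum time function for the system ẏ = F(y) + G(y)u, u ∈ [−1,1]^M. Suppose x ∈ bdry 𝓡_τ and there exists an admissible control steering x to the origin exactly in time τ, and let ζ be a Fréchet normal to 𝓡_τ at x. Then the minimized Hamiltonian satisfies h(x, ζ) = ⟨ζ, F(x)⟩ + min_{u ∈ [−1,1]^M} ⟨ζ, G(x)u⟩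 ≤ 0. -/
noncomputable section
open MeasureTheory

/-- The set of times in which `x` can be steered to the origin. -/
def steerTimes {N M : ℕ} (F : (Fin N → ℝ) → Fin N → ℝ)
    (G : Fin M → (Fin N → ℝ) → Fin N → ℝ) (x : Fin N → ℝ) : Set ℝ :=
  {t | 0 ≤ t ∧ ∃ u y, IsAdmissible M u ∧ IsNLTraj F G t u x y ∧ y t = 0}

/-- The minimum time function `T`. -/
def minTime {N M : ℕ} (F : (Fin N → ℝ) → Fin N → ℝ)
    (G : Fin M → (Fin N → ℝ) → Fin N → ℝ) (x : Fin N → ℝ) : ℝ :=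
  sInf (steerTimes F G x)

/-- The sublevel set `𝓡_τ = {z : T(z) ≤ τ}` of the minimum time function. -/
def minTimeSublevel {N M : ℕ} (F : (Fin N → ℝ) → Fin N → ℝ)
    (G : Fin M → (Fin N → ℝ) → Fin N → ℝ) (τ : ℝ) : Set (Fin N → ℝ) :=
  {z | (steerTimes F G z).Nonempty ∧ minTime F G z ≤ τ}

/-- The Fréchet normal cone to `K` at `x`:
`limsup_{K ∋ y → x} ⟨v, (y-x)/‖y-x‖⟩ ≤ 0`. -/
def frechetNormal {N : ℕ} (K : Set (Fin N → ℝ)) (x : Fin N → ℝ) : Set (Fin N → ℝ) :=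
  {v | ∀ ε : ℝ, 0 < ε → ∃ δ : ℝ, 0 < δ ∧ ∀ y ∈ K, euNorm (y - x) < δ →
    euDot v (y - x) ≤ ε * euNorm (y - x)}

/-!
Let `y` be the trajectory steering `x` to the origin in time `τ`. For `s ∈ [0, τ]` the point
`y s` reaches the origin in the remaining time `τ - s`, so `y s ∈ 𝓡_τ`, and the Fréchet normal
condition gives `⟨ζ, y s - x⟩ ≤ ε ‖y s - x‖ = O(ε s)` for small `s`. On the other hand
`y s - x = ∫₀ˢ ẏ` and `⟨ζ, ẏ r⟩ ≥ h(y r, ζ)`, where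
`h(z, ζ) = ⟨ζ, F z⟩ - ∑ᵢ |⟨ζ, Gᵢ z⟩|` is the minimized Hamiltonian, continuous in `z`.
If `h(x, ζ) > 0`, then `⟨ζ, y s - x⟩ ≥ s h(x, ζ) / 2` for small `s`, a contradiction.
-/

open Filter Topology Set

theorem isLeast_sum_mul_cube {ι : Type*} [Fintype ι] (c : ι → ℝ) :
    IsLeast ((fun a : ι → ℝ => ∑ i, a i * c i) '' {a | ∀ i, a i ∈ Icc (-1 : ℝ) 1})
      (-∑ i, |c i|) := by
  refine ⟨⟨fun i => -(SignType.sign (c i) : ℝ), fun i => ?_, ?_⟩, ?_⟩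
  · show -((SignType.sign (c i) : SignType) : ℝ) ∈ Icc (-1) 1
    generalize SignType.sign (c i) = σ
    cases σ <;> norm_num
  · simp [Finset.sum_neg_distrib]
  · rintro _ ⟨a, ha, rfl⟩
    rw [← Finset.sum_neg_distrib]
    refine Finset.sum_le_sum fun i _ => ?_
    have hai := abs_le.2 (ha i)
    have : |a i * c i| ≤ |c i| := by
      rw [abs_mul]; exact mul_le_of_le_one_left (abs_nonneg _) hai
    linarith [neg_abs_le (a i * c i)]

theorem eventually_mul_le_intervalIntegral {φ : ℝ → ℝ} (hφ : Continuous φ) {a : ℝ}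
    (ha : a < φ 0) : ∀ᶠ s in 𝓝[>] 0, a * s ≤ ∫ r in (0 : ℝ)..s, φ r := by
  obtain ⟨δ, hδ, hφδ⟩ := Metric.eventually_nhds_iff.1 (hφ.continuousAt.eventually (lt_mem_nhds ha))
  filter_upwards [Ioo_mem_nhdsGT hδ] with s hs
  calc a * s = ∫ _ in (0 : ℝ)..s, a := by simp [mul_comm]
    _ ≤ ∫ r in (0 : ℝ)..s, φ r := by
      refine intervalIntegral.integral_mono_on hs.1.le intervalIntegrable_const
        (hφ.intervalIntegrable _ _) fun r hr => (hφδ ?_).le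
      rw [Real.dist_eq, sub_zero, abs_of_nonneg hr.1]
      exact hr.2.trans_lt hs.2

section FrechetNormal

variable {E : Type*} [NormedAddCommGroup E] [NormedSpace ℝ E] [CompleteSpace E]

theorem eventually_intervalIntegral_apply_le {K : Set E} {x : E} {ℓ : E →L[ℝ] ℝ}
    (hℓ : ∀ ε > 0, ∀ᶠ z in 𝓝[K] x, ℓ (z - x) ≤ ε * ‖z - x‖) {f : ℝ → E} {τ C : ℝ}
    (hτ : 0 < τ) (hf : IntervalIntegrable f volume 0 τ) (hfC : ∀ r ∈ Icc 0 τ, ‖f r‖ ≤ C)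
    (hK : ∀ s ∈ Ioc 0 τ, x + ∫ r in (0 : ℝ)..s, f r ∈ K) {ε : ℝ} (hε : 0 < ε) :
    ∀ᶠ s in 𝓝[>] 0, ∫ r in (0 : ℝ)..s, ℓ (f r) ≤ ε * (C * s) := by
  have hnorm : ∀ s ∈ Ioc 0 τ, ‖∫ r in (0 : ℝ)..s, f r‖ ≤ C * s := fun s hs => by
    have hfCs : ∀ r ∈ uIoc 0 s, ‖f r‖ ≤ C := fun r hr => by
      rw [uIoc_of_le hs.1.le] at hr
      exact hfC r ⟨hr.1.le, hr.2.trans hs.2⟩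
    simpa [abs_of_pos hs.1] using intervalIntegral.norm_integral_le_of_norm_le_const hfCs
  have hγ : Tendsto (fun s => x + ∫ r in (0 : ℝ)..s, f r) (𝓝[>] 0) (𝓝[K] x) := by
    refine tendsto_nhdsWithin_iff.2 ⟨?_, eventually_of_mem (Ioc_mem_nhdsGT hτ) hK⟩
    have hC : Tendsto (fun s => C * s) (𝓝[>] 0) (𝓝 0) := by
      simpa using ((continuous_const_mul C).tendsto 0).mono_left nhdsWithin_le_nhds
    simpa using tendsto_const_nhds.add
      (squeeze_zero_norm' (eventually_of_mem (Ioc_mem_nhdsGT hτ) hnorm) hC)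
  filter_upwards [hγ.eventually (hℓ ε hε), Ioc_mem_nhdsGT hτ] with s hs hsτ
  have hfs : IntervalIntegrable f volume 0 s :=
    hf.mono_set (uIcc_subset_uIcc_left (by simp [uIcc_of_le, hτ.le, hsτ.1.le, hsτ.2]))
  rw [add_sub_cancel_left, ← ℓ.intervalIntegral_comp_comm hfs] at hs
  exact hs.trans (mul_le_mul_of_nonneg_left (hnorm s hsτ) hε.le)

theorem le_zero_of_le_apply_of_curve_mem {K : Set E} {x : E} {ℓ : E →L[ℝ] ℝ}
    (hℓ : ∀ ε > 0, ∀ᶠ z in 𝓝[K] x, ℓ (z - x) ≤ ε * ‖z - x‖) {f : ℝ → E} {τ C : ℝ}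
    (hτ : 0 < τ) (hf : IntervalIntegrable f volume 0 τ) (hfC : ∀ r ∈ Icc 0 τ, ‖f r‖ ≤ C)
    (hK : ∀ s ∈ Ioc 0 τ, x + ∫ r in (0 : ℝ)..s, f r ∈ K) {φ : ℝ → ℝ} (hφ : Continuous φ)
    (hφf : ∀ r ∈ Icc 0 τ, φ r ≤ ℓ (f r)) :
    φ 0 ≤ 0 := by
  by_contra! hpos
  have hC : 0 ≤ C := (norm_nonneg _).trans (hfC 0 ⟨le_rfl, hτ.le⟩)
  set ε := φ 0 / (2 * (C + 1)) with hε_def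
  have hε : 0 < ε := by positivity
  obtain ⟨s, hlow, hup, hs⟩ := ((eventually_mul_le_intervalIntegral hφ (half_lt_self hpos)).and
    ((eventually_intervalIntegral_apply_le hℓ hτ hf hfC hK hε).and
      (Ioc_mem_nhdsGT hτ))).exists
  have hfs : IntervalIntegrable f volume 0 s :=
    hf.mono_set (uIcc_subset_uIcc_left (by simp [uIcc_of_le, hτ.le, hs.1.le, hs.2]))
  have hmono : ∫ r in (0 : ℝ)..s, φ r ≤ ∫ r in (0 : ℝ)..s, ℓ (f r) :=
    intervalIntegral.integral_mono_on hs.1.le (hφ.intervalIntegrable _ _)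
      ⟨ℓ.integrable_comp hfs.1, ℓ.integrable_comp hfs.2⟩
      fun r hr => hφf r ⟨hr.1, hr.2.trans hs.2⟩
  have key : φ 0 / 2 * s ≤ ε * C * s := by linarith
  have hsmall : ε * C < φ 0 / 2 := by
    rw [hε_def, div_mul_eq_mul_div, div_lt_div_iff₀ (by positivity) two_pos]
    nlinarith
  linarith [le_of_mul_le_mul_right key hs.1]

end FrechetNormal

def euDotCLM {N : ℕ} (ζ : Fin N → ℝ) : (Fin N → ℝ) →L[ℝ] ℝ :=
  ∑ i, ζ i • ContinuousLinearMap.proj i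

@[simp]
theorem euDotCLM_apply {N : ℕ} (ζ v : Fin N → ℝ) : euDotCLM ζ v = euDot ζ v := by
  simp [euDotCLM, euDot]

theorem euDot_sum_smul {N M : ℕ} (ζ : Fin N → ℝ) (a : Fin M → ℝ) (w : Fin M → Fin N → ℝ) :
    euDot ζ (∑ i, a i • w i) = ∑ i, a i * euDot ζ (w i) := by
  simp [← euDotCLM_apply, map_sum]

theorem euNorm_le_sqrt_mul_norm {N : ℕ} (v : Fin N → ℝ) : euNorm v ≤ √N * ‖v‖ := by
  rw [euNorm, ← Real.sqrt_sq (norm_nonneg v), ← Real.sqrt_mul (Nat.cast_nonneg N)]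
  refine Real.sqrt_le_sqrt ?_
  calc ∑ i, v i ^ 2 ≤ ∑ _i : Fin N, ‖v‖ ^ 2 := Finset.sum_le_sum fun i _ => by
        rw [← sq_abs, ← Real.norm_eq_abs]
        exact pow_le_pow_left₀ (norm_nonneg _) (norm_le_pi_norm v i) 2
    _ = N * ‖v‖ ^ 2 := by simp

theorem eventually_euDotCLM_sub_le {N : ℕ} {K : Set (Fin N → ℝ)} {x ζ : Fin N → ℝ}
    (hζ : ζ ∈ frechetNormal K x) {ε : ℝ} (hε : 0 < ε) :
    ∀ᶠ z in 𝓝[K] x, euDotCLM ζ (z - x) ≤ ε * ‖z - x‖ := by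
  obtain ⟨δ, hδ, hζδ⟩ := hζ (ε / (√N + 1)) (by positivity)
  filter_upwards [self_mem_nhdsWithin, mem_nhdsWithin_of_mem_nhds
    (Metric.ball_mem_nhds x (show 0 < δ / (√N + 1) by positivity))] with z hzK hzx
  rw [mem_ball_iff_norm] at hzx
  have hN : euNorm (z - x) ≤ (√N + 1) * ‖z - x‖ :=
    (euNorm_le_sqrt_mul_norm _).trans (by nlinarith [norm_nonneg (z - x)])
  have hlt : euNorm (z - x) < δ :=
    hN.trans_lt (by rwa [lt_div_iff₀' (by positivity)] at hzx)
  calc euDotCLM ζ (z - x) = euDot ζ (z - x) := euDotCLM_apply ζ (z - x)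
    _ ≤ ε / (√N + 1) * euNorm (z - x) := hζδ z hzK hlt
    _ ≤ ε / (√N + 1) * ((√N + 1) * ‖z - x‖) := by gcongr
    _ = ε * ‖z - x‖ := by field_simp

def ctrlVelocity {N M : ℕ} (F : (Fin N → ℝ) → Fin N → ℝ) (G : Fin M → (Fin N → ℝ) → Fin N → ℝ)
    (u : ℝ → Fin M → ℝ) (y : ℝ → Fin N → ℝ) (r : ℝ) : Fin N → ℝ :=
  F (y r) + ∑ i, u r i • G i (y r)

section Control

variable {N M : ℕ} {F : (Fin N → ℝ) → Fin N → ℝ} {G : Fin M → (Fin N → ℝ) → Fin N → ℝ}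
  {u : ℝ → Fin M → ℝ} {y : ℝ → Fin N → ℝ}

theorem IsAdmissible.comp_add_right (hu : IsAdmissible M u) (s : ℝ) :
    IsAdmissible M fun t => u (t + s) :=
  ⟨hu.1.comp (measurable_add_const s), fun t => hu.2 (t + s)⟩

theorem norm_ctrlVelocity_le (hu : IsAdmissible M u) (r : ℝ) :
    ‖ctrlVelocity F G u y r‖ ≤ ‖F (y r)‖ + ∑ i, ‖G i (y r)‖ := by
  refine (norm_add_le _ _).trans ?_
  gcongr
  refine (norm_sum_le _ _).trans (Finset.sum_le_sum fun i _ => ?_)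
  rw [norm_smul]
  exact mul_le_of_le_one_left (norm_nonneg _) (abs_le.2 (hu.2 r i))

theorem exists_norm_ctrlVelocity_le (hF : Continuous F) (hG : ∀ i, Continuous (G i))
    (hu : IsAdmissible M u) (hy : Continuous y) (a b : ℝ) :
    ∃ C, ∀ r ∈ Icc a b, ‖ctrlVelocity F G u y r‖ ≤ C := by
  have hbound : Continuous fun r => ‖F (y r)‖ + ∑ i, ‖G i (y r)‖ := by fun_prop
  obtain ⟨C, hC⟩ := isCompact_Icc.exists_bound_of_continuousOn hbound.continuousOn
  exact ⟨C, fun r hr => (norm_ctrlVelocity_le hu r).trans ((le_abs_self _).trans (hC r hr))⟩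

theorem intervalIntegrable_ctrlVelocity (hF : Continuous F) (hG : ∀ i, Continuous (G i))
    (hu : IsAdmissible M u) (hy : Continuous y) (a b : ℝ) :
    IntervalIntegrable (ctrlVelocity F G u y) volume a b := by
  have hmeas : Measurable (ctrlVelocity F G u y) :=
    (hF.comp hy).measurable.add (Finset.measurable_sum _ fun i _ =>
      ((measurable_pi_apply i).comp hu.1).smul ((hG i).comp hy).measurable)
  obtain ⟨C, hC⟩ := exists_norm_ctrlVelocity_le hF hG hu hy (min a b) (max a b)
  exact (Measure.integrableOn_of_bounded measure_Icc_lt_top.ne hmeas.aestronglyMeasurable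
    ((ae_restrict_mem measurableSet_uIcc).mono hC)).intervalIntegrable

theorem IsNLTraj.eq_add_intervalIntegral {τ : ℝ} {x : Fin N → ℝ} (hy : IsNLTraj F G τ u x y)
    {t : ℝ} (ht : t ∈ Icc 0 τ) : y t = x + ∫ r in (0 : ℝ)..t, ctrlVelocity F G u y r :=
  hy.2.2 t ht

theorem IsNLTraj.comp_add_right {τ : ℝ} {x : Fin N → ℝ} (hF : Continuous F)
    (hG : ∀ i, Continuous (G i)) (hu : IsAdmissible M u) (hy : IsNLTraj F G τ u x y) {s : ℝ}
    (hs : s ∈ Icc 0 τ) :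
    IsNLTraj F G (τ - s) (fun t => u (t + s)) (y s) fun t => y (t + s) := by
  have hf := intervalIntegrable_ctrlVelocity hF hG hu hy.1
  refine ⟨hy.1.comp (continuous_add_const s), by simp, fun t ht => ?_⟩
  have hts : t + s ∈ Icc 0 τ := ⟨by linarith [ht.1, hs.1], by linarith [ht.2]⟩
  change y (t + s) = y s + ∫ r in (0 : ℝ)..t, ctrlVelocity F G u y (r + s)
  rw [intervalIntegral.integral_comp_add_right, zero_add, hy.eq_add_intervalIntegral hts,
    hy.eq_add_intervalIntegral hs, add_assoc, intervalIntegral.integral_add_adjacent_intervals (hf 0 s) (hf s (t + s))]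

theorem mem_minTimeSublevel_of_isNLTraj {τ : ℝ} {x : Fin N → ℝ} (hF : Continuous F)
    (hG : ∀ i, Continuous (G i)) (hu : IsAdmissible M u) (hy : IsNLTraj F G τ u x y)
    (hyτ : y τ = 0) {s : ℝ} (hs : s ∈ Icc 0 τ) : y s ∈ minTimeSublevel F G τ := by
  have hsteer : τ - s ∈ steerTimes F G (y s) :=
    ⟨by linarith [hs.2], _, _, hu.comp_add_right s, hy.comp_add_right hF hG hu hs,
      by simpa using hyτ⟩
  exact ⟨⟨_, hsteer⟩, (csInf_le ⟨0, fun t ht => ht.1⟩ hsteer).trans (by linarith [hs.1])⟩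

end Control

def minHamiltonian {N M : ℕ} (F : (Fin N → ℝ) → Fin N → ℝ)
    (G : Fin M → (Fin N → ℝ) → Fin N → ℝ) (ζ z : Fin N → ℝ) : ℝ :=
  euDot ζ (F z) - ∑ i, |euDot ζ (G i z)|

section Hamiltonian

variable {N M : ℕ} {F : (Fin N → ℝ) → Fin N → ℝ} {G : Fin M → (Fin N → ℝ) → Fin N → ℝ}

theorem euDot_add_sInf_eq_minHamiltonian (ζ z : Fin N → ℝ) :
    euDot ζ (F z) + sInf ((fun a : Fin M → ℝ => euDot ζ (∑ i, a i • G i z)) ''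
      {a | ∀ i, a i ∈ Icc (-1 : ℝ) 1}) = minHamiltonian F G ζ z := by
  simp only [euDot_sum_smul, (isLeast_sum_mul_cube _).csInf_eq, minHamiltonian, sub_eq_add_neg]

theorem minHamiltonian_le_euDot {a : Fin M → ℝ} (ha : ∀ i, a i ∈ Icc (-1 : ℝ) 1)
    (ζ z : Fin N → ℝ) : minHamiltonian F G ζ z ≤ euDot ζ (F z + ∑ i, a i • G i z) := by
  rw [← euDotCLM_apply, map_add, euDotCLM_apply, euDotCLM_apply, euDot_sum_smul, minHamiltonian,
    sub_eq_add_neg]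
  exact add_le_add le_rfl ((isLeast_sum_mul_cube _).2 ⟨a, ha, rfl⟩)

theorem continuous_minHamiltonian (hF : Continuous F) (hG : ∀ i, Continuous (G i))
    (ζ : Fin N → ℝ) : Continuous (minHamiltonian F G ζ) := by
  have hdot : Continuous (euDot ζ) := (euDotCLM ζ).continuous.congr (euDotCLM_apply ζ)
  unfold minHamiltonian
  fun_prop

end Hamiltonian

theorem minimized_hamiltonian_nonpositive_general
    (N M : ℕ)
    (F : (Fin N → ℝ) → Fin N → ℝ) (G : Fin M → (Fin N → ℝ) → Fin N → ℝ)
    (hFLip : ∃ K : NNReal, LipschitzWith K F)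
    (hGLip : ∀ i, ∃ K : NNReal, LipschitzWith K (G i))
    (τ : ℝ) (hτ : 0 < τ)
    (x : Fin N → ℝ)
    (hsteer : ∃ u y, IsAdmissible M u ∧ IsNLTraj F G τ u x y ∧ y τ = 0)
    (ζ : Fin N → ℝ) (hζ : ζ ∈ frechetNormal (minTimeSublevel F G τ) x) :
    euDot ζ (F x) +
      sInf ((fun u : Fin M → ℝ => euDot ζ (∑ i, u i • G i x)) ''
        {u | ∀ i, u i ∈ Set.Icc (-1 : ℝ) 1}) ≤ 0 := by
  have hF : Continuous F := hFLip.choose_spec.continuous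
  have hG : ∀ i, Continuous (G i) := fun i => (hGLip i).choose_spec.continuous
  obtain ⟨u, y, hu, hy, hyτ⟩ := hsteer
  obtain ⟨C, hC⟩ := exists_norm_ctrlVelocity_le hF hG hu hy.1 0 τ
  rw [euDot_add_sInf_eq_minHamiltonian, ← hy.2.1]
  refine le_zero_of_le_apply_of_curve_mem (fun ε => eventually_euDotCLM_sub_le hζ) hτ
    (intervalIntegrable_ctrlVelocity hF hG hu hy.1 0 τ) hC (fun s hs => ?_)
    ((continuous_minHamiltonian hF hG ζ).comp hy.1) fun r _ => ?_
  · rw [← hy.eq_add_intervalIntegral (Ioc_subset_Icc_self hs)]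
    exact mem_minTimeSublevel_of_isNLTraj hF hG hu hy hyτ (Ioc_subset_Icc_self hs)
  · rw [Function.comp_apply, euDotCLM_apply]
    exact minHamiltonian_le_euDot (hu.2 r) ζ (y r)

/-- at a boundary point `x` of the sublevel set `𝓡_τ` which can
be steered to the origin exactly in time `τ`, the minimized Hamiltonian
`h(x,ζ) = ⟨ζ, F(x)⟩ + min_{u ∈ [-1,1]^M} ⟨ζ, G(x)u⟩` is `≤ 0` for every
Fréchet normal `ζ`. -/
theorem minimized_hamiltonian_nonpositive
    (N M : ℕ) (hN : 2 ≤ N) (hM1 : 1 ≤ M) (hMN : M ≤ N)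
    (F : (Fin N → ℝ) → Fin N → ℝ) (G : Fin M → (Fin N → ℝ) → Fin N → ℝ)
    (hFLip : ∃ K : NNReal, LipschitzWith K F)
    (hGLip : ∀ i, ∃ K : NNReal, LipschitzWith K (G i))
    (τ : ℝ) (hτ : 0 < τ)
    (x : Fin N → ℝ) (hx : x ∈ frontier (minTimeSublevel F G τ))
    (hsteer : ∃ u y, IsAdmissible M u ∧ IsNLTraj F G τ u x y ∧ y τ = 0)
    (ζ : Fin N → ℝ) (hζ : ζ ∈ frechetNormal (minTimeSublevel F G τ) x) :
    euDot ζ (F x) +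
      sInf ((fun u : Fin M → ℝ => euDot ζ (∑ i, u i • G i x)) ''
        {u | ∀ i, u i ∈ Set.Icc (-1 : ℝ) 1}) ≤ 0 :=
  minimized_hamiltonian_nonpositive_general N M F G hFLip hGLip τ hτ x hsteer ζ hζ
end
end

section
/- Let a < b be real numbers, let K : (a,b) → [0,1] be measurable, and let k ∈ ℕ. Then ∫_a^b (t − a)^k K(t) dt ≥ (1/(k+1)) (∫_a^b K(t) dt)^{k+1}, and likewise ∫_a^b (b − t)^k K(t) dt ≥ (1/(k+1)) (∫_a^b K(t) dt)^{k+1}. -/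
/-!
Bathtub principle: among all densities `K` with values in `[0, 1]` and a given mass `c`,
a nondecreasing weight `g` is integrated least by the indicator of `[a, a + c]`. Indeed, on
`[a, a + c]` the deficit `∫ (1 - K)` equals the mass `K` puts to the right of `a + c`, and
`g` is at most `g (a + c)` on the left and at least `g (a + c)` on the right. For
`g t = (t - a) ^ k` that extremal integral is `c ^ (k + 1) / (k + 1)`; the case of
`(b - t) ^ k` follows by the reflection `t ↦ a + b - t`.
-/

open MeasureTheory Set intervalIntegral

section Bathtub

variable {a b : ℝ} {g K : ℝ → ℝ}

theorem ae_norm_le_one_of_mem_Icc (hK01 : ∀ t ∈ Ioo a b, K t ∈ Icc (0 : ℝ) 1) :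
    ∀ᵐ t ∂volume.restrict (Ioo a b), ‖K t‖ ≤ 1 :=
  (ae_restrict_iff' measurableSet_Ioo).2 (ae_of_all _ fun t ht => by
    rw [Real.norm_eq_abs, abs_le]
    constructor <;> linarith [(hK01 t ht).1, (hK01 t ht).2])

theorem IntervalIntegrable.mul_of_mem_Icc (hg : IntervalIntegrable g volume a b) (hab : a ≤ b)
    (hKi : IntervalIntegrable K volume a b) (hK01 : ∀ t ∈ Ioo a b, K t ∈ Icc (0 : ℝ) 1) :
    IntervalIntegrable (fun t => g t * K t) volume a b := by
  rw [intervalIntegrable_iff_integrableOn_Ioo_of_le hab] at hg hKi ⊢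
  simpa only [IntegrableOn, mul_comm (K _)] using
    hg.bdd_mul hKi.aestronglyMeasurable (ae_norm_le_one_of_mem_Icc hK01)

theorem intervalIntegral_mem_Icc_of_mem_Icc (hab : a ≤ b) (hKi : IntervalIntegrable K volume a b)
    (hK01 : ∀ t ∈ Ioo a b, K t ∈ Icc (0 : ℝ) 1) :
    ∫ t in a..b, K t ∈ Icc 0 (b - a) := by
  constructor
  · simpa using integral_mono_on_of_le_Ioo hab intervalIntegrable_const hKi
      fun t ht => (hK01 t ht).1
  · simpa [hab] using integral_mono_on_of_le_Ioo hab hKi intervalIntegrable_const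
      fun t ht => (hK01 t ht).2

theorem integral_le_integral_mul_of_monotoneOn (hab : a ≤ b) (hg : MonotoneOn g (Icc a b))
    (hKi : IntervalIntegrable K volume a b) (hK01 : ∀ t ∈ Ioo a b, K t ∈ Icc (0 : ℝ) 1) :
    ∫ t in a..a + ∫ t in a..b, K t, g t ≤ ∫ t in a..b, g t * K t := by
  set m := a + ∫ t in a..b, K t
  obtain ⟨hc0, hcb⟩ := intervalIntegral_mem_Icc_of_mem_Icc hab hKi hK01
  have ham : a ≤ m := by linarith
  have hmb : m ≤ b := by linarith
  have hgi : IntervalIntegrable g volume a b := (uIcc_of_le hab ▸ hg).intervalIntegrable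
  have hgKi : IntervalIntegrable (fun t => g t * K t) volume a b := hgi.mul_of_mem_Icc hab hKi hK01
  have hm : m ∈ uIcc a b := by rw [uIcc_of_le hab]; exact ⟨ham, hmb⟩
  have hsub₁ : uIcc a m ⊆ uIcc a b := uIcc_subset_uIcc_left hm
  have hsub₂ : uIcc m b ⊆ uIcc a b := uIcc_subset_uIcc_right hm
  have hK_split : ∫ t in a..m, (1 - K t) = ∫ t in m..b, K t := by
    rw [integral_sub intervalIntegrable_const (hKi.mono_set hsub₁),
      intervalIntegral.integral_const, smul_eq_mul, mul_one]
    linarith [integral_add_adjacent_intervals (hKi.mono_set hsub₁) (hKi.mono_set hsub₂)]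
  have hg1K : IntervalIntegrable (fun t => g t * (1 - K t)) volume a m := by
    simpa only [mul_sub, mul_one] using (hgi.sub hgKi).mono_set hsub₁
  have hgm : ∀ t ∈ Ioo a b, (t ≤ m → g t ≤ g m) ∧ (m ≤ t → g m ≤ g t) :=
    fun t ht => ⟨hg ⟨ht.1.le, ht.2.le⟩ ⟨ham, hmb⟩,
      hg ⟨ham, hmb⟩ ⟨ht.1.le, ht.2.le⟩⟩
  calc ∫ t in a..m, g t
      = (∫ t in a..m, g t * K t) + ∫ t in a..m, g t * (1 - K t) := by
        rw [← integral_add (hgKi.mono_set hsub₁) hg1K]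
        congr 1; ext t; ring
    _ ≤ (∫ t in a..m, g t * K t) + ∫ t in a..m, g m * (1 - K t) := by
        gcongr
        refine integral_mono_on_of_le_Ioo ham hg1K
          ((intervalIntegrable_const.sub (hKi.mono_set hsub₁)).const_mul _) fun t ht => ?_
        have ht' : t ∈ Ioo a b := ⟨ht.1, ht.2.trans_le hmb⟩
        exact mul_le_mul_of_nonneg_right ((hgm t ht').1 ht.2.le) (sub_nonneg.2 (hK01 t ht').2)
    _ = (∫ t in a..m, g t * K t) + g m * ∫ t in m..b, K t := by
        rw [intervalIntegral.integral_const_mul, hK_split]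
    _ ≤ (∫ t in a..m, g t * K t) + ∫ t in m..b, g t * K t := by
        gcongr
        rw [← intervalIntegral.integral_const_mul]
        refine integral_mono_on_of_le_Ioo hmb ((hKi.mono_set hsub₂).const_mul _)
          (hgKi.mono_set hsub₂) fun t ht => ?_
        have ht' : t ∈ Ioo a b := ⟨ham.trans_lt ht.1, ht.2⟩
        exact mul_le_mul_of_nonneg_right ((hgm t ht').2 ht.1.le) (hK01 t ht').1
    _ = ∫ t in a..b, g t * K t :=
        integral_add_adjacent_intervals (hgKi.mono_set hsub₁) (hgKi.mono_set hsub₂)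

theorem integral_le_integral_mul_of_antitoneOn (hab : a ≤ b) (hg : AntitoneOn g (Icc a b))
    (hKi : IntervalIntegrable K volume a b) (hK01 : ∀ t ∈ Ioo a b, K t ∈ Icc (0 : ℝ) 1) :
    ∫ t in b - ∫ t in a..b, K t..b, g t ≤ ∫ t in a..b, g t * K t := by
  have hrefl_mem : ∀ {t}, a ≤ t → t ≤ b → a + b - t ∈ Icc a b := fun h₁ h₂ =>
    ⟨by linarith, by linarith⟩
  have hrefl : ∀ f : ℝ → ℝ, ∫ t in a..b, f (a + b - t) = ∫ t in a..b, f t := fun f => by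
    rw [integral_comp_sub_left, add_sub_cancel_right, add_sub_cancel_left]
  have key := integral_le_integral_mul_of_monotoneOn (g := fun t => g (a + b - t))
    (K := fun t => K (a + b - t)) hab
    (fun x hx y hy hxy => hg (hrefl_mem hy.1 hy.2) (hrefl_mem hx.1 hx.2) (by linarith))
    (by simpa using (hKi.comp_sub_left (a + b)).symm)
    (fun t ht => hK01 _ ⟨by linarith [ht.2], by linarith [ht.1]⟩)
  rwa [hrefl K, hrefl (fun t => g t * K t), integral_comp_sub_left, add_sub_cancel_left,
    add_sub_add_left_eq_sub] at key

end Bathtub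

/-- for measurable `K : (a,b) → [0,1]` and `k ∈ ℕ`,
`∫_a^b (t-a)^k K(t) dt ≥ (1/(k+1)) (∫_a^b K(t) dt)^{k+1}` and likewise with
`(b-t)^k` in place of `(t-a)^k`. -/
theorem integral_pow_mul_ge
    (a b : ℝ) (hab : a < b) (K : ℝ → ℝ) (hK : Measurable K)
    (hK01 : ∀ t ∈ Set.Ioo a b, K t ∈ Set.Icc (0 : ℝ) 1) (k : ℕ) :
    (1 / (k + 1) : ℝ) * (∫ t in a..b, K t) ^ (k + 1) ≤ ∫ t in a..b, (t - a) ^ k * K t ∧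
    (1 / (k + 1) : ℝ) * (∫ t in a..b, K t) ^ (k + 1) ≤ ∫ t in a..b, (b - t) ^ k * K t := by
  have hKi : IntervalIntegrable K volume a b := by
    rw [intervalIntegrable_iff_integrableOn_Ioo_of_le hab.le]
    exact Measure.integrableOn_of_bounded measure_Ioo_lt_top.ne hK.aestronglyMeasurable
      (ae_norm_le_one_of_mem_Icc hK01)
  set c := ∫ t in a..b, K t
  have hc : (1 / (k + 1) : ℝ) * c ^ (k + 1) = ∫ t in 0..c, t ^ k := by
    rw [integral_pow]; ring
  constructor
  · calc (1 / (k + 1) : ℝ) * c ^ (k + 1) = ∫ t in a..a + c, (t - a) ^ k := by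
          rw [hc, integral_comp_sub_right (· ^ k), sub_self, add_sub_cancel_left]
      _ ≤ ∫ t in a..b, (t - a) ^ k * K t :=
          integral_le_integral_mul_of_monotoneOn hab.le
            (fun x hx y _ hxy => pow_le_pow_left₀ (sub_nonneg.2 hx.1) (by linarith) k) hKi hK01
  · calc (1 / (k + 1) : ℝ) * c ^ (k + 1) = ∫ t in b - c..b, (b - t) ^ k := by
          rw [hc, integral_comp_sub_left (· ^ k), sub_self, sub_sub_cancel]
      _ ≤ ∫ t in a..b, (b - t) ^ k * K t :=
          integral_le_integral_mul_of_antitoneOn hab.le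
            (fun x _ y hy hxy => pow_le_pow_left₀ (sub_nonneg.2 hy.2) (by linarith) k) hKi hK01
end
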